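/- arXiv:1401.6970 — 9 statements merged into one kernel-verified Lean document; each statement's English description precedes it below -/
import Mathlib

section
/- For the canonical contraction Δ²_M : TM ×_M ∧²T*M → T*M, (v,α) ↦ i_v α, which in coordinates is Δ²_M = p_{μν} ẋ^μ dx^ν, one has d_T^2 Δ²_M = −p_{μν} y^{μν} − ẋ^ν y^μ_{μν} = −(1/2) p_{μν}(y^{μν} − y^{νμ}) − ẋ^ν y^μ_{μν}. -/
noncomputable section

/-- Coordinate model of vectors: functions on an index set. -/
abbrev Vec (ι : Type) := ι → ℝ

/-- Coordinate model of bivectors on `Vec ι`: (antisymmetric) matrices. -/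
abbrev Biv (ι : Type) := ι → ι → ℝ

/-- Antisymmetry of a bivector matrix. -/
def IsAnti {ι : Type} (u : Biv ι) : Prop := ∀ a b, u a b = - u b a

/-- Raw coordinate model of the exterior derivative of a `k`-form
(given as a function of a point and `k` tangent vectors). -/
def Dext {A : Type} [NormedAddCommGroup A] [NormedSpace ℝ A] {k : ℕ}
    (φ : A → (Fin k → A) → ℝ) : A → (Fin (k+1) → A) → ℝ :=
  fun x w => ∑ i : Fin (k+1), (-1 : ℝ)^(i : ℕ) *
    fderiv ℝ (fun y => φ y (fun j => w (i.succAbove j))) x (w i)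

/-- Pull-back of a raw `k`-form along a map. -/
def pullF {A B : Type} [NormedAddCommGroup A] [NormedSpace ℝ A]
    [NormedAddCommGroup B] [NormedSpace ℝ B] {k : ℕ}
    (f : A → B) (φ : B → (Fin k → B) → ℝ) : A → (Fin k → A) → ℝ :=
  fun x w => φ (f x) (fun i => fderiv ℝ f x (w i))

/-- The operator `i_T^2`: insertion of the bivector into the first two slots of a
`(k+2)`-form on the base, producing a semi-basic `k`-form on `∧²TN`
(modelled on `Vec ι × Biv ι`; only the base components of the arguments are used,
reflecting semi-basicity). -/
def iT2 {ι : Type} [Fintype ι] [DecidableEq ι] {k : ℕ}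
    (φ : Vec ι → (Fin (k+2) → Vec ι) → ℝ) :
    (Vec ι × Biv ι) → (Fin k → Vec ι × Biv ι) → ℝ :=
  fun p w => (1/2 : ℝ) * ∑ a, ∑ b, p.2 a b *
    φ p.1 (Matrix.vecCons (Pi.single a 1)
      (Matrix.vecCons (Pi.single b 1) (fun i => (w i).1)))

/-- The operator `d_T^2 = d ∘ i_T^2 − i_T^2 ∘ d` on `(k+2)`-forms, `k ≥ 0`. -/
def dT2 {ι : Type} [Fintype ι] [DecidableEq ι] {k : ℕ}
    (φ : Vec ι → (Fin (k+2) → Vec ι) → ℝ) :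
    (Vec ι × Biv ι) → (Fin (k+1) → Vec ι × Biv ι) → ℝ :=
  fun p w => Dext (iT2 φ) p w - iT2 (Dext φ) p w

/-- `i_T^2` on 1-forms lands in `(−1)`-forms, i.e. is zero. -/
def iT2one {ι : Type} (_φ : Vec ι → (Fin 1 → Vec ι) → ℝ) :
    (Vec ι × Biv ι) → ℝ := fun _ => 0

/-- `d_T^2` on 1-forms: `d ∘ i_T^2 − i_T^2 ∘ d = − i_T^2 ∘ d`. -/
def dT2one {ι : Type} [Fintype ι] [DecidableEq ι]
    (φ : Vec ι → (Fin 1 → Vec ι) → ℝ) : (Vec ι × Biv ι) → ℝ :=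
  fun p => - iT2 (Dext φ) p (fun i => i.elim0)

end

/-!
STATEMENT 5: For the canonical contraction `Δ²_M : TM ×_M ∧²T*M → T*M`, `(v,α) ↦ i_v α`,
which in coordinates is `Δ²_M = p_{μν} ẋ^μ dx^ν`, one has
`d_T^2 Δ²_M = −p_{μν} y^{μν} − ẋ^ν y^μ_{μν} = −(1/2) p_{μν}(y^{μν} − y^{νμ}) − ẋ^ν y^μ_{μν}`.

Coordinate model: the manifold `TM ×_M ∧²T*M` has coordinates `x^μ` (`ι`), `ẋ^ν` (`ι`),
`p_{μν}` (`ι × ι`, antisymmetric), indexed by `ι ⊕ (ι ⊕ ι × ι)`;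
`y^{μν} = u (inl μ) (inr (inl ν))` and `y^μ_{νλ} = u (inl μ) (inr (inr (ν,λ)))`.
-/


/-! Because `u` is antisymmetric, `i_T^2 dΔ` collapses to `∑_c ∂_{u^{·c}} Δ_c`, the derivative of the
`c`-th coefficient of `Δ` along the `c`-th column of `u`. Only the `dx^ν`-coefficients `p_{μν} ẋ^μ`
are nonzero, and the Leibniz rule splits their derivatives into `y^μ_{μν}`- and `y^{μν}`-terms;
antisymmetry of `p`, of `u` and of `y^μ_{νλ}` in `ν λ` brings these into the stated form. -/

open Finset

lemma sum_mul_apply_single {ι : Type} [Fintype ι] [DecidableEq ι] (L : (ι → ℝ) →L[ℝ] ℝ)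
    (v : ι → ℝ) : ∑ a, v a * L (Pi.single a 1) = L v := by
  conv_rhs => rw [← univ_sum_single v, map_sum]
  refine sum_congr rfl fun a _ => ?_
  rw [← smul_eq_mul, ← map_smul, ← Pi.single_smul', smul_eq_mul, mul_one]

lemma sum_sum_mul_swap_of_anti {ι : Type} [Fintype ι] {P : ι → ι → ℝ}
    (hP : ∀ a c, P a c = -P c a) (Y : ι → ι → ℝ) :
    ∑ a, ∑ c, P a c * Y c a = -∑ a, ∑ c, P a c * Y a c := by
  rw [sum_comm, ← sum_neg_distrib]
  refine sum_congr rfl fun c _ => ?_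
  rw [← sum_neg_distrib]
  exact sum_congr rfl fun a _ => by rw [hP]; ring

lemma iT2_Dext_eq_sum_fderiv {ι : Type} [Fintype ι] [DecidableEq ι] {u : Biv ι} (hu : IsAnti u)
    (φ : Vec ι → (Fin 1 → Vec ι) → ℝ) (x : Vec ι) (w : Fin 0 → Vec ι × Biv ι) :
    iT2 (Dext φ) (x, u) w =
      ∑ c, fderiv ℝ (fun y => φ y (fun _ => Pi.single c 1)) x (fun a => u a c) := by
  set D : ι → ι → ℝ := fun a c =>
    fderiv ℝ (fun y => φ y (fun _ => Pi.single c 1)) x (Pi.single a 1)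
  have hiT2 : iT2 (Dext φ) (x, u) w = (1 / 2 : ℝ) * ∑ a, ∑ c, u a c * (D a c - D c a) := by
    have hslot : ∀ v v' : Vec ι, (fun j : Fin 1 =>
        Matrix.vecCons v (Matrix.vecCons v' fun i => (w i).1) (Fin.succAbove 1 j)) = fun _ => v :=
      fun _ _ => funext fun j => by rw [Fin.fin_one_eq_zero j]; rfl
    simp [iT2, Dext, Fin.sum_univ_two, D, sub_eq_add_neg, hslot]
  have hsym : iT2 (Dext φ) (x, u) w = ∑ a, ∑ c, u a c * D a c := by
    rw [hiT2]
    simp only [mul_sub, sum_sub_distrib]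
    rw [sum_sum_mul_swap_of_anti hu]
    ring
  rw [hsym, sum_comm]
  simp only [D, sum_mul_apply_single]

lemma fderiv_sum_coord_mul_coord_apply {κ η : Type} [Fintype κ] [Fintype η] (i j : η → κ)
    (b h : κ → ℝ) :
    fderiv ℝ (fun y : κ → ℝ => ∑ μ, y (i μ) * y (j μ)) b h
      = ∑ μ, (h (i μ) * b (j μ) + b (i μ) * h (j μ)) := by
  have hderiv : HasFDerivAt (fun y : κ → ℝ => ∑ μ, y (i μ) * y (j μ))
      (∑ μ, (b (i μ) • (ContinuousLinearMap.proj (j μ) : (κ → ℝ) →L[ℝ] ℝ)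
        + b (j μ) • (ContinuousLinearMap.proj (i μ) : (κ → ℝ) →L[ℝ] ℝ))) b :=
    HasFDerivAt.fun_sum fun μ _ => (hasFDerivAt_apply (i μ) b).mul (hasFDerivAt_apply (j μ) b)
  rw [hderiv.fderiv]
  simp only [_root_.sum_apply, add_apply, smul_apply, ContinuousLinearMap.proj_apply, smul_eq_mul]
  exact sum_congr rfl fun μ _ => by ring

lemma sum_fderiv_sum_mul_single_inl {ι κ : Type} [Fintype ι] [DecidableEq ι] [Fintype κ]
    [DecidableEq κ] (f : ι → Vec (ι ⊕ κ) → ℝ) (x : Vec (ι ⊕ κ)) (v : ι ⊕ κ → Vec (ι ⊕ κ)) :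
    ∑ c, fderiv ℝ (fun y => ∑ ν, f ν y * (Pi.single c 1 : Vec (ι ⊕ κ)) (Sum.inl ν)) x (v c)
      = ∑ ν, fderiv ℝ (f ν) x (v (Sum.inl ν)) := by
  simp [Fintype.sum_sum_type, Pi.single_apply]

theorem dT2_Delta2_coordinates {ι : Type} [Fintype ι] [DecidableEq ι]
    (Δ : Vec (ι ⊕ (ι ⊕ ι × ι)) → (Fin 1 → Vec (ι ⊕ (ι ⊕ ι × ι))) → ℝ)
    (hΔ : Δ = fun b w => ∑ ν, (∑ μ, b (Sum.inr (Sum.inr (μ, ν))) * b (Sum.inr (Sum.inl μ)))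
        * w 0 (Sum.inl ν))
    (b : Vec (ι ⊕ (ι ⊕ ι × ι)))
    (hb : ∀ μ ν, b (Sum.inr (Sum.inr (μ, ν))) = - b (Sum.inr (Sum.inr (ν, μ))))
    (u : Biv (ι ⊕ (ι ⊕ ι × ι))) (hu : IsAnti u)
    (hup : ∀ i μ ν, u i (Sum.inr (Sum.inr (μ, ν))) = - u i (Sum.inr (Sum.inr (ν, μ)))) :
    dT2one Δ (b, u) =
      - (∑ μ, ∑ ν, b (Sum.inr (Sum.inr (μ, ν))) * u (Sum.inl μ) (Sum.inr (Sum.inl ν)))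
      - (∑ ν, b (Sum.inr (Sum.inl ν)) * ∑ μ, u (Sum.inl μ) (Sum.inr (Sum.inr (μ, ν)))) ∧
    dT2one Δ (b, u) =
      - (1/2 : ℝ) * (∑ μ, ∑ ν, b (Sum.inr (Sum.inr (μ, ν))) *
          (u (Sum.inl μ) (Sum.inr (Sum.inl ν)) - u (Sum.inl ν) (Sum.inr (Sum.inl μ))))
      - (∑ ν, b (Sum.inr (Sum.inl ν)) * ∑ μ, u (Sum.inl μ) (Sum.inr (Sum.inr (μ, ν)))) := by
  have hd : dT2one Δ (b, u) = -∑ ν, ∑ μ,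
      (u (Sum.inr (Sum.inr (μ, ν))) (Sum.inl ν) * b (Sum.inr (Sum.inl μ))
        + b (Sum.inr (Sum.inr (μ, ν))) * u (Sum.inr (Sum.inl μ)) (Sum.inl ν)) := by
    simp only [hΔ, dT2one, iT2_Dext_eq_sum_fderiv hu, sum_fderiv_sum_mul_single_inl,
      fderiv_sum_coord_mul_coord_apply]
  have hvel : ∑ ν, ∑ μ, b (Sum.inr (Sum.inr (μ, ν))) * u (Sum.inr (Sum.inl μ)) (Sum.inl ν)
      = ∑ μ, ∑ ν, b (Sum.inr (Sum.inr (μ, ν))) * u (Sum.inl μ) (Sum.inr (Sum.inl ν)) := by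
    rw [sum_comm, ← neg_neg (∑ μ, ∑ ν, _), ← sum_sum_mul_swap_of_anti hb]
    simp only [hu (Sum.inr (Sum.inl _)), mul_neg, sum_neg_distrib, neg_neg]
  have hmom : ∑ ν, ∑ μ, u (Sum.inr (Sum.inr (μ, ν))) (Sum.inl ν) * b (Sum.inr (Sum.inl μ))
      = ∑ ν, b (Sum.inr (Sum.inl ν)) * ∑ μ, u (Sum.inl μ) (Sum.inr (Sum.inr (μ, ν))) := by
    simp only [mul_sum]
    rw [sum_comm (γ := ι) (f := fun ν μ => b (Sum.inr (Sum.inl ν)) * _)]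
    exact sum_congr rfl fun ν _ => sum_congr rfl fun μ _ => by rw [hu, hup]; ring
  have hfirst : dT2one Δ (b, u) =
      - (∑ μ, ∑ ν, b (Sum.inr (Sum.inr (μ, ν))) * u (Sum.inl μ) (Sum.inr (Sum.inl ν)))
      - (∑ ν, b (Sum.inr (Sum.inl ν)) * ∑ μ, u (Sum.inl μ) (Sum.inr (Sum.inr (μ, ν)))) := by
    rw [hd, ← hvel, ← hmom]
    simp only [sum_add_distrib]
    ring
  refine ⟨hfirst, hfirst.trans ?_⟩
  simp only [mul_sub, sum_sub_distrib]
  rw [sum_sum_mul_swap_of_anti hb]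
  ring
end

section
/- There is a well-defined smooth map κ²_M : ∧²T(TM) → T(∧²TM) determined by κ²_M(v∧w) = T∧²(κ_M(v), κ_M(w)) for v,w ∈ T(TM) with τ_{TM}(v)=τ_{TM}(w), where κ_M: TTM → TTM is the canonical flip; in the induced coordinates it is given by (x^μ, ẋ^{κλ}, x'^ν, ẋ'^{ρσ})∘κ²_M = (x^μ, ẋ^{κλ}, ẋ^ν, y^{ρσ}−y^{σρ}). -/
noncomputable section

variable {ι : Type} [Fintype ι] [DecidableEq ι]

/-- Flatten a tangent vector of `TM` (components `(x', xd')`) into coordinates over `ι ⊕ ι`. -/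
def flatTT (w : Vec ι × Vec ι) : Vec (ι ⊕ ι) := Sum.elim w.1 w.2

/-- The bivector `v ∧ w` in matrix coordinates. -/
def wedgeMat (v w : Vec ι × Vec ι) : Biv (ι ⊕ ι) :=
  fun i j => flatTT v i * flatTT w j - flatTT v j * flatTT w i

/-- The fiberwise wedge `∧² : TM ×_M TM → ∧²TM` on fibers. -/
def w2 (a b : Vec ι) : Biv ι := fun μ ν => a μ * b ν - a ν * b μ

/-- The canonical flip `κ_M : TTM → TTM`, `(x,xd,x',xd') ↦ (x,x',xd,xd')`,
written as (base point, vector) ↦ (base point, vector). -/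
def kappaM (z : (Vec ι × Vec ι) × (Vec ι × Vec ι)) : (Vec ι × Vec ι) × (Vec ι × Vec ι) :=
  ((z.1.1, z.2.1), (z.1.2, z.2.2))

/-- The tangent map `T∧²` of the fiberwise wedge `TM ×_M TM → ∧²TM`:
an element of `T(TM ×_M TM)` is a base point `(x, a, b)` with vector `(δx, δa, δb)`;
its image is the point `(x, a∧b)` with vector `(δx, a∧δb + δa∧b)`. -/
def Twedge (z : (Vec ι × Vec ι × Vec ι) × (Vec ι × Vec ι × Vec ι)) :
    (Vec ι × Biv ι) × (Vec ι × Biv ι) :=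
  ((z.1.1, w2 z.1.2.1 z.1.2.2),
   (z.2.1, fun μ ν => w2 z.1.2.1 z.2.2.2 μ ν + w2 z.2.2.1 z.1.2.2 μ ν))

/-!
STATEMENT 6: There is a well-defined smooth map `κ²_M : ∧²T(TM) → T(∧²TM)` determined by
`κ²_M(v∧w) = T∧²(κ_M(v), κ_M(w))` for `v,w ∈ T(TM)` with `τ_{TM}(v) = τ_{TM}(w)`,
given in the induced coordinates by
`(x^μ, xd^{κλ}, x'^ν, xd'^{ρσ}) ∘ κ²_M = (x^μ, xd^{κλ}, xd^ν, y^{ρσ} − y^{σρ})`.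
Here an element of `∧²T(TM)` is a base point `(x, xd) ∈ TM` together with an antisymmetric
matrix `u` over `ι ⊕ ι` (`xd^{κλ} = u (inl κ) (inl λ)`, `y^{ρσ} = u (inl ρ) (inr σ)`).
-/

theorem kappa2_well_defined_and_coordinates
    (K : ((Vec ι × Vec ι) × Biv (ι ⊕ ι)) → (Vec ι × Biv ι) × (Vec ι × Biv ι))
    (hK : K = fun p => ((p.1.1, fun kk ll => p.2 (Sum.inl kk) (Sum.inl ll)),
      (p.1.2, fun ρ σ => p.2 (Sum.inl ρ) (Sum.inr σ) - p.2 (Sum.inl σ) (Sum.inr ρ)))) :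
    -- κ²_M is smooth:
    ContDiff ℝ (⊤ : ℕ∞) K ∧
    -- and is determined on decomposable bivectors by `κ²(v∧w) = T∧²(κ_M v, κ_M w)`:
    (∀ (x xd : Vec ι) (v w : Vec ι × Vec ι),
      K ((x, xd), wedgeMat v w) =
        Twedge ((((kappaM ((x, xd), v)).1.1),
                  ((kappaM ((x, xd), v)).1.2, (kappaM ((x, xd), w)).1.2)),
                (((kappaM ((x, xd), v)).2.1),
                  ((kappaM ((x, xd), v)).2.2, (kappaM ((x, xd), w)).2.2)))) := by
  subst hK
  constructor
  · have : (fun (p : ((Vec ι × Vec ι) × Biv (ι ⊕ ι))) =>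
        ((p.1.1, fun kk ll => p.2 (Sum.inl kk) (Sum.inl ll)),
          (p.1.2, fun ρ σ => p.2 (Sum.inl ρ) (Sum.inr σ) - p.2 (Sum.inl σ) (Sum.inr ρ)))
        : _ → (Vec ι × Biv ι) × (Vec ι × Biv ι)) = fun p =>
        ((p.1.1, fun kk ll => p.2 (Sum.inl kk) (Sum.inl ll)),
          (p.1.2, fun ρ σ => p.2 (Sum.inl ρ) (Sum.inr σ) - p.2 (Sum.inl σ) (Sum.inr ρ))) := rfl
    refine ContDiff.prodMk (ContDiff.prodMk ?_ ?_) (ContDiff.prodMk ?_ ?_)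
    · exact (contDiff_fst.comp contDiff_fst)
    · exact contDiff_pi.2 fun kk => contDiff_pi.2 fun ll =>
        ((ContinuousLinearMap.proj (R := ℝ) (φ := fun _ : ι ⊕ ι => ℝ)
          (Sum.inl ll)).contDiff).comp
          (((ContinuousLinearMap.proj (R := ℝ) (φ := fun _ : ι ⊕ ι => Vec (ι ⊕ ι))
            (Sum.inl kk)).contDiff).comp contDiff_snd)
    · exact (contDiff_snd.comp contDiff_fst)
    · refine contDiff_pi.2 fun ρ => contDiff_pi.2 fun σ => ContDiff.sub ?_ ?_
      · exact ((ContinuousLinearMap.proj (R := ℝ) (φ := fun _ : ι ⊕ ι => ℝ)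
          (Sum.inr σ)).contDiff).comp
          (((ContinuousLinearMap.proj (R := ℝ) (φ := fun _ : ι ⊕ ι => Vec (ι ⊕ ι))
            (Sum.inl ρ)).contDiff).comp contDiff_snd)
      · exact ((ContinuousLinearMap.proj (R := ℝ) (φ := fun _ : ι ⊕ ι => ℝ)
          (Sum.inr ρ)).contDiff).comp
          (((ContinuousLinearMap.proj (R := ℝ) (φ := fun _ : ι ⊕ ι => Vec (ι ⊕ ι))
            (Sum.inl σ)).contDiff).comp contDiff_snd)
  · intro x xd v w
    simp only [wedgeMat, flatTT, kappaM, Twedge, w2, Sum.elim_inl, Sum.elim_inr]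
    refine Prod.ext (Prod.ext rfl ?_) (Prod.ext rfl ?_) <;> funext μ ν <;>
      simp only [w2] <;> ring

end
end

section
/- The bi-tangent lift to ∧²TM of a vector field Y = Y^μ ∂_{x^μ} on M, defined by d_T^2 Y = κ²_M ∘ ∧²TY, is given in coordinates by d_T^2 Y = Y^μ ∂_{x^μ} + (1/2)( (∂Y^ν/∂x^λ) ẋ^{λκ} − (∂Y^κ/∂x^σ) ẋ^{σν} ) ∂_{ẋ^{νκ}}. -/
noncomputable section

variable {ι : Type} [Fintype ι] [DecidableEq ι]

/-- The second exterior power `∧²T(Y)` of a vector field `Y`, regarded as a map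
`M → TM`, applied to bivectors: `(x,u) ↦ ((x, Y x), ∧²(D(id,Y))u)`. -/
def LamTY (Y : Vec ι → Vec ι) : (Vec ι × Biv ι) → ((Vec ι × Vec ι) × Biv (ι ⊕ ι)) :=
  fun p => ((p.1, Y p.1), fun i j => ∑ a, ∑ b,
    fderiv ℝ (fun x => Sum.elim x (Y x) : Vec ι → Vec (ι ⊕ ι)) p.1 (Pi.single a 1) i *
    fderiv ℝ (fun x => Sum.elim x (Y x) : Vec ι → Vec (ι ⊕ ι)) p.1 (Pi.single b 1) j *
    p.2 a b)

/-!
STATEMENT 9: The bi-tangent lift to `∧²TM` of a vector field `Y = Y^μ ∂_{x^μ}` on `M`,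
defined by `d_T^2 Y = κ²_M ∘ ∧²TY`, is given in coordinates by
`d_T^2 Y = Y^μ ∂_{x^μ} + (1/2)((∂Y^ν/∂x^λ) ẋ^{λκ} − (∂Y^κ/∂x^σ) ẋ^{σν}) ∂_{ẋ^{νκ}}`,
i.e. as a tangent vector at `(x,u) ∈ ∧²TM` it has components
`(Y x, (ν,κ) ↦ ∑_λ (∂Y^ν/∂x^λ) u^{λκ} − ∑_σ (∂Y^κ/∂x^σ) u^{σν})`.
-/

theorem bitangent_lift_coordinates
    (K : ((Vec ι × Vec ι) × Biv (ι ⊕ ι)) → (Vec ι × Biv ι) × (Vec ι × Biv ι))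
    (hK : K = fun p => ((p.1.1, fun kk ll => p.2 (Sum.inl kk) (Sum.inl ll)),
      (p.1.2, fun ρ σ => p.2 (Sum.inl ρ) (Sum.inr σ) - p.2 (Sum.inl σ) (Sum.inr ρ))))
    (Y : Vec ι → Vec ι) (hY : ContDiff ℝ (⊤ : ℕ∞) Y)
    (x : Vec ι) (u : Biv ι) (hu : IsAnti u) :
    K (LamTY Y (x, u)) =
      ((x, u), (Y x, fun ν kk =>
        (∑ l, fderiv ℝ (fun y => Y y ν) x (Pi.single l 1) * u l kk) -
        (∑ σ, fderiv ℝ (fun y => Y y kk) x (Pi.single σ 1) * u σ ν))) := by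
  subst hK
  have hYd : Differentiable ℝ Y := hY.differentiable (by simp)
  have hdiff : ∀ i, DifferentiableAt ℝ
      (fun y : Vec ι => (Sum.elim y (Y y) : Vec (ι ⊕ ι)) i) x := by
    intro i; cases i with
    | inl k => exact (differentiable_apply k).differentiableAt
    | inr k => exact ((differentiable_apply k).comp hYd).differentiableAt
  have hfder : ∀ (a : ι) (i : ι ⊕ ι),
      fderiv ℝ (fun y : Vec ι => (Sum.elim y (Y y) : Vec (ι ⊕ ι))) x (Pi.single a 1) i
      = fderiv ℝ (fun y : Vec ι => (Sum.elim y (Y y) : Vec (ι ⊕ ι)) i) x (Pi.single a 1) := by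
    intro a i
    rw [fderiv_pi hdiff]; rfl
  have hinl : ∀ (a k : ι),
      fderiv ℝ (fun y : Vec ι => (Sum.elim y (Y y) : Vec (ι ⊕ ι)) (Sum.inl k)) x
        (Pi.single a 1) = if k = a then 1 else 0 := by
    intro a k
    have h1 : (fun y : Vec ι => (Sum.elim y (Y y) : Vec (ι ⊕ ι)) (Sum.inl k))
        = fun y : Vec ι => y k := rfl
    have h2 : fderiv ℝ (fun y : Vec ι => y k) x
        = ContinuousLinearMap.proj (R := ℝ) (φ := fun _ : ι => ℝ) k :=
      (ContinuousLinearMap.proj (R := ℝ) (φ := fun _ : ι => ℝ) k).fderiv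
    rw [h1, h2]
    simp [Pi.single_apply]
  have hinr : ∀ (a k : ι),
      fderiv ℝ (fun y : Vec ι => (Sum.elim y (Y y) : Vec (ι ⊕ ι)) (Sum.inr k)) x
        (Pi.single a 1) = fderiv ℝ (fun y => Y y k) x (Pi.single a 1) := by
    intro a k; rfl
  refine Prod.ext (Prod.ext rfl ?_) (Prod.ext rfl ?_)
  · funext kk ll
    simp only [LamTY, hfder, hinl]
    simp [Finset.mul_sum, Finset.sum_ite_eq, Finset.sum_ite_eq', eq_comm]
  · funext ν kk
    simp only [LamTY, hfder, hinl, hinr]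
    have h1 : ∀ (ρ σ : ι), (∑ a, ∑ b,
        (if ρ = a then (1:ℝ) else 0) * fderiv ℝ (fun y => Y y σ) x (Pi.single b 1) * u a b)
        = ∑ b, fderiv ℝ (fun y => Y y σ) x (Pi.single b 1) * u ρ b := by
      intro ρ σ
      rw [Finset.sum_eq_single ρ]
      · simp
      · intro a _ ha
        simp [Ne.symm ha]
      · simp
    simp only [h1]
    have h2 : ∀ (σ : ι) (b : ι), u ν b = - u b ν := fun _ b => hu ν b
    rw [show (∑ b, fderiv ℝ (fun y => Y y kk) x (Pi.single b 1) * u ν b)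
        = - ∑ b, fderiv ℝ (fun y => Y y kk) x (Pi.single b 1) * u b ν by
      rw [← Finset.sum_neg_distrib]
      exact Finset.sum_congr rfl fun b _ => by rw [hu ν b]; ring]
    rw [show (∑ b, fderiv ℝ (fun y => Y y ν) x (Pi.single b 1) * u kk b)
        = - ∑ b, fderiv ℝ (fun y => Y y ν) x (Pi.single b 1) * u b kk by
      rw [← Finset.sum_neg_distrib]
      exact Finset.sum_congr rfl fun b _ => by rw [hu kk b]; ring]
    ring

end
end

section
/- The relation α²_M ⊂ ∧²T(∧²T*M) × T*(∧²TM), defined as the dual of the converse of κ²_M via the pairings d_T^2 Δ²_M and the canonical pairing of T*(∧²TM) with T(∧²TM), is the graph of a smooth map given in coordinates by (x^μ, ẋ^{νσ}, p_ρ, f_{λκ}) ∘ α²_M = (x^μ, ẋ^{νσ}, −y^η_{ηρ}, −p_{λκ}), where (x^μ, p_{λκ}, ẋ^{νσ}, y^η_{θρ}, ṗ_{γδεζ}) are the coordinates on ∧²T(∧²T*M). -/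
lemma Dext_apply_pair {A : Type} [NormedAddCommGroup A] [NormedSpace ℝ A]
    (φ : A → (Fin 1 → A) → ℝ) (P v w : A) :
    Dext φ P ![v, w] = fderiv ℝ (fun y => φ y ![w]) P v - fderiv ℝ (fun y => φ y ![v]) P w := by
  have h0 : (fun j : Fin 1 => ![v, w] ((0 : Fin 2).succAbove j)) = ![w] := by
    ext j; fin_cases j; rfl
  have h1 : (fun j : Fin 1 => ![v, w] ((1 : Fin 2).succAbove j)) = ![v] := by
    ext j; fin_cases j; rfl
  rw [Dext, Fin.sum_univ_two, h0, h1]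
  simp [sub_eq_add_neg]

lemma dT2one_apply {J : Type} [Fintype J] [DecidableEq J]
    (φ : Vec J → (Fin 1 → Vec J) → ℝ) (P : Vec J) (W : Biv J) :
    dT2one φ (P, W) =
      -((1/2 : ℝ) * ∑ a, ∑ c, W a c * Dext φ P ![Pi.single a 1, Pi.single c 1]) := by
  rw [dT2one, iT2, Matrix.empty_eq (fun i : Fin 0 => _)]

lemma IsAnti.half_sum_sum_mul_sub {J : Type} [Fintype J] {W : Biv J} (hW : IsAnti W)
    (M : Biv J) : (1/2 : ℝ) * ∑ a, ∑ c, W a c * (M a c - M c a) = ∑ a, ∑ c, W a c * M a c := by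
  have hswap : ∑ a, ∑ c, W a c * M c a = - ∑ a, ∑ c, W a c * M a c := calc
    _ = ∑ c, ∑ a, W a c * M c a := Finset.sum_comm
    _ = ∑ c, ∑ a, -(W c a * M c a) :=
      Finset.sum_congr rfl fun c _ => Finset.sum_congr rfl fun a _ => by rw [hW a c, neg_mul]
    _ = _ := by simp only [Finset.sum_neg_distrib]
  simp only [mul_sub, Finset.sum_sub_distrib, hswap]
  ring

theorem dT2one_of_isAnti {J : Type} [Fintype J] [DecidableEq J]
    (φ : Vec J → (Fin 1 → Vec J) → ℝ) (P : Vec J) {W : Biv J} (hW : IsAnti W) :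
    dT2one φ (P, W) = ∑ c, fderiv ℝ (fun y => φ y ![Pi.single c 1]) P (fun a => W c a) := by
  simp only [dT2one_apply, Dext_apply_pair]
  rw [hW.half_sum_sum_mul_sub, Finset.sum_comm, ← Finset.sum_neg_distrib]
  refine Finset.sum_congr rfl fun c _ => ?_
  conv_rhs => rw [pi_eq_sum_univ' (fun a => W c a)]
  simp only [map_sum, map_smul, smul_eq_mul, hW c, neg_mul, Finset.sum_neg_distrib]

lemma fderiv_sum_apply_mul_apply {J K : Type} [Fintype J] [Fintype K] (A B : K → J) (P v : Vec J) :
    fderiv ℝ (fun y : Vec J => ∑ k, y (A k) * y (B k)) P v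
      = ∑ k, (P (A k) * v (B k) + P (B k) * v (A k)) := by
  have hasDeriv : HasFDerivAt (fun y : Vec J => ∑ k, y (A k) * y (B k))
      (∑ k, (P (A k) • ContinuousLinearMap.proj (R := ℝ) (B k) +
        P (B k) • ContinuousLinearMap.proj (R := ℝ) (A k))) P :=
    HasFDerivAt.fun_sum (A := fun k (y : Vec J) => y (A k) * y (B k)) fun k _ =>
      (hasFDerivAt_apply (A k) P).mul (hasFDerivAt_apply (B k) P)
  simp [hasDeriv.fderiv]

section

variable {ι : Type}

/-- A lift of `u` to `∧²T(TM ×_M ∧²T*M)` whose `x`–`ẋ` block, the free part of `w`, is `Z`. -/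
def liftBiv (U : Biv (ι ⊕ ι × ι)) (Z : Biv ι) : Biv (ι ⊕ (ι ⊕ ι × ι))
  | .inl μ, .inl ν => U (.inl μ) (.inl ν)
  | .inl μ, .inr (.inl ν) => Z μ ν
  | .inr (.inl μ), .inl ν => - Z ν μ
  | .inl μ, .inr (.inr q) => U (.inl μ) (.inr q)
  | .inr (.inr q), .inl ν => U (.inr q) (.inl ν)
  | .inr (.inr q), .inr (.inr q') => U (.inr q) (.inr q')
  | _, _ => 0

lemma isAnti_liftBiv {U : Biv (ι ⊕ ι × ι)} (hU : IsAnti U) (Z : Biv ι) :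
    IsAnti (liftBiv U Z) := by
  rintro (μ | μ | q) (ν | ν | q') <;> first | exact hU _ _ | simp [liftBiv]

lemma liftBiv_apply_inr_inr_swap {U : Biv (ι ⊕ ι × ι)}
    (hUp : ∀ i μ ν, U i (Sum.inr (μ, ν)) = - U i (Sum.inr (ν, μ))) (Z : Biv ι)
    (i : ι ⊕ (ι ⊕ ι × ι)) (μ ν : ι) :
    liftBiv U Z i (Sum.inr (Sum.inr (μ, ν))) = - liftBiv U Z i (Sum.inr (Sum.inr (ν, μ))) := by
  rcases i with μ' | μ' | q <;> first | exact hUp _ _ _ | simp [liftBiv]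

variable [Fintype ι]

/-- `Δ²_M = p_{μν} ẋ^μ dx^ν` on `TM ×_M ∧²T*M`, with the coordinates `x`, `ẋ`, `p` indexed by
`Sum.inl`, `Sum.inr ∘ Sum.inl` and `Sum.inr ∘ Sum.inr`. -/
def liouvilleForm (ι : Type) [Fintype ι] :
    Vec (ι ⊕ (ι ⊕ ι × ι)) → (Fin 1 → Vec (ι ⊕ (ι ⊕ ι × ι))) → ℝ :=
  fun b w => ∑ ν, (∑ μ, b (Sum.inr (Sum.inr (μ, ν))) * b (Sum.inr (Sum.inl μ))) * w 0 (Sum.inl ν)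

lemma liouvilleForm_single_inl [DecidableEq ι] (y : Vec (ι ⊕ (ι ⊕ ι × ι))) (ν : ι) :
    liouvilleForm ι y ![Pi.single (Sum.inl ν) 1] =
      ∑ μ, y (Sum.inr (Sum.inr (μ, ν))) * y (Sum.inr (Sum.inl μ)) := by
  simp [liouvilleForm, Pi.single_apply]

lemma liouvilleForm_single_inr [DecidableEq ι] (y : Vec (ι ⊕ (ι ⊕ ι × ι))) (j : ι ⊕ ι × ι) :
    liouvilleForm ι y ![Pi.single (Sum.inr j) 1] = 0 := by
  simp [liouvilleForm]

theorem dT2one_liouvilleForm [DecidableEq ι] (P : Vec (ι ⊕ (ι ⊕ ι × ι)))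
    {W : Biv (ι ⊕ (ι ⊕ ι × ι))} (hW : IsAnti W) :
    dT2one (liouvilleForm ι) (P, W) = ∑ ν, ∑ μ,
      (P (Sum.inr (Sum.inr (μ, ν))) * W (Sum.inl ν) (Sum.inr (Sum.inl μ)) +
        P (Sum.inr (Sum.inl μ)) * W (Sum.inl ν) (Sum.inr (Sum.inr (μ, ν)))) := by
  simp only [dT2one_of_isAnti _ P hW, Fintype.sum_sum_type, liouvilleForm_single_inl,
    liouvilleForm_single_inr, fderiv_const_apply, zero_apply,
    Finset.sum_const_zero, add_zero, fderiv_sum_apply_mul_apply]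

theorem pairing_sub_dT2one_liouvilleForm [DecidableEq ι]
    {b : Vec (ι ⊕ ι × ι)} (hb : ∀ μ ν, b (Sum.inr (μ, ν)) = - b (Sum.inr (ν, μ)))
    {U : Biv (ι ⊕ ι × ι)} (hUp : ∀ i μ ν, U i (Sum.inr (μ, ν)) = - U i (Sum.inr (ν, μ)))
    {f : Biv ι} (hf : IsAnti f) {W : Biv (ι ⊕ (ι ⊕ ι × ι))} (hW : IsAnti W)
    (hWU : ∀ μ q, W (Sum.inl μ) (Sum.inr (Sum.inr q)) = U (Sum.inl μ) (Sum.inr q))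
    (pc xdv : Vec ι) :
    (∑ ρ, pc ρ * xdv ρ) + (1/2 : ℝ) * (∑ l, ∑ k, f l k *
        (W (Sum.inl l) (Sum.inr (Sum.inl k)) - W (Sum.inl k) (Sum.inr (Sum.inl l)))) -
      dT2one (liouvilleForm ι) (Sum.elim (b ∘ Sum.inl) (Sum.elim xdv (b ∘ Sum.inr)), W) =
    ∑ ρ, (pc ρ + ∑ η, U (Sum.inl η) (Sum.inr (η, ρ))) * xdv ρ +
      ∑ l, ∑ k, (f l k + b (Sum.inr (l, k))) * W (Sum.inl l) (Sum.inr (Sum.inl k)) := by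
  have hvel : ∑ ν, ∑ μ, b (Sum.inr (μ, ν)) * W (Sum.inl ν) (Sum.inr (Sum.inl μ)) =
      - ∑ l, ∑ k, b (Sum.inr (l, k)) * W (Sum.inl l) (Sum.inr (Sum.inl k)) := by
    rw [← Finset.sum_neg_distrib]
    refine Finset.sum_congr rfl fun l _ => ?_
    rw [← Finset.sum_neg_distrib]
    exact Finset.sum_congr rfl fun k _ => by rw [hb k l, neg_mul]
  have hmom : ∑ ν, ∑ μ, xdv μ * W (Sum.inl ν) (Sum.inr (Sum.inr (μ, ν))) =
      - ∑ ρ, (∑ η, U (Sum.inl η) (Sum.inr (η, ρ))) * xdv ρ := by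
    rw [Finset.sum_comm, ← Finset.sum_neg_distrib]
    refine Finset.sum_congr rfl fun ρ _ => ?_
    rw [Finset.sum_mul, ← Finset.sum_neg_distrib]
    exact Finset.sum_congr rfl fun η _ => by rw [hWU, hUp]; ring
  rw [dT2one_liouvilleForm _ hW, hf.half_sum_sum_mul_sub]
  simp only [Sum.elim_inl, Sum.elim_inr, Function.comp_apply, Finset.sum_add_distrib, hvel, hmom,
    add_mul]
  ring

end

noncomputable section

variable {ι : Type} [Fintype ι] [DecidableEq ι]

/-!
Coordinate model:
* `∧²T(∧²T*M)`: a base point `b : Vec (ι ⊕ ι × ι)` (coordinates `x^μ, p_{μν}`) and an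
  antisymmetric matrix `U : Biv (ι ⊕ ι × ι)` (blocks `ẋ^{μν}, y^μ_{νλ}, ṗ`);
* `T*(∧²TM)`: `(x', Ẋ, pc, f)` with `pc_ρ dx^ρ + (1/2) f_{λκ} dẋ^{λκ}` at `(x', Ẋ)`;
* `w ∈ ∧²T(TM)` with `∧²Tτ_M(w) = π_{∧²TM}(p̃)` and a lift `W` of `(u,w)` to
  `∧²T(TM ×_M ∧²T*M)` (all lifts give the same value of the semi-basic `d_T^2 Δ²_M`);
* `⟨p̃, κ²_M(w)⟩ = ∑ pc_ρ ẋ^ρ_w + (1/2)∑ f_{λκ}(y_w^{λκ} − y_w^{κλ})` by the coordinate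
  form of `κ²_M`.
-/

theorem alpha2_graph_general
    (Δ : Vec (ι ⊕ (ι ⊕ ι × ι)) → (Fin 1 → Vec (ι ⊕ (ι ⊕ ι × ι))) → ℝ)
    (hΔ : Δ = fun b w => ∑ ν, (∑ μ, b (Sum.inr (Sum.inr (μ, ν))) * b (Sum.inr (Sum.inl μ)))
        * w 0 (Sum.inl ν))
    (b : Vec (ι ⊕ ι × ι)) (hb : ∀ μ ν, b (Sum.inr (μ, ν)) = - b (Sum.inr (ν, μ)))
    (U : Biv (ι ⊕ ι × ι)) (hU : IsAnti U)
    (hUp : ∀ i μ ν, U i (Sum.inr (μ, ν)) = - U i (Sum.inr (ν, μ)))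
    (x' : Vec ι) (Xd : Biv ι) (pc : Vec ι) (f : Biv ι) (hf : IsAnti f) :
    -- the relation `α²_M` ...
    ((x' = b ∘ Sum.inl ∧ Xd = fun μ ν => U (Sum.inl μ) (Sum.inl ν)) ∧
      ∀ (xdv : Vec ι) (W : Biv (ι ⊕ (ι ⊕ ι × ι))), IsAnti W →
        (∀ i μ ν, W i (Sum.inr (Sum.inr (μ, ν))) = - W i (Sum.inr (Sum.inr (ν, μ)))) →
        -- `W` projects onto `u`:
        (∀ μ ν, W (Sum.inl μ) (Sum.inl ν) = U (Sum.inl μ) (Sum.inl ν)) →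
        (∀ μ q, W (Sum.inl μ) (Sum.inr (Sum.inr q)) = U (Sum.inl μ) (Sum.inr q)) →
        (∀ q q', W (Sum.inr (Sum.inr q)) (Sum.inr (Sum.inr q')) = U (Sum.inr q) (Sum.inr q')) →
        -- `W` projects onto a `w ∈ ∧²T(TM)` with `∧²Tτ_M(w) = (x', Ẋ)`;
        -- the duality condition `⟨p̃, κ²_M(w)⟩ = d_T^2 Δ²_M (u, w)`:
        (∑ ρ, pc ρ * xdv ρ) + (1/2 : ℝ) * (∑ l, ∑ k, f l k *
            (W (Sum.inl l) (Sum.inr (Sum.inl k)) - W (Sum.inl k) (Sum.inr (Sum.inl l)))) =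
          dT2one Δ (Sum.elim (b ∘ Sum.inl) (Sum.elim xdv (b ∘ Sum.inr)), W))
    -- ... holds iff the covector is the image of `u` under the coordinate map `α²_M`:
    ↔ (x' = b ∘ Sum.inl ∧ (Xd = fun μ ν => U (Sum.inl μ) (Sum.inl ν)) ∧
        (pc = fun ρ => - ∑ η, U (Sum.inl η) (Sum.inr (η, ρ))) ∧
        (f = fun l k => - b (Sum.inr (l, k)))) := by
  obtain rfl : Δ = liouvilleForm ι := hΔ
  constructor
  · rintro ⟨hbase, hdual⟩
    have hdefect (xdv : Vec ι) (Z : Biv ι) :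
        ∑ ρ, (pc ρ + ∑ η, U (Sum.inl η) (Sum.inr (η, ρ))) * xdv ρ +
          ∑ l, ∑ k, (f l k + b (Sum.inr (l, k))) * Z l k = 0 := by
      have h := pairing_sub_dT2one_liouvilleForm hb hUp hf (isAnti_liftBiv hU Z) (fun _ _ => rfl)
        pc xdv
      rw [hdual xdv _ (isAnti_liftBiv hU Z) (liftBiv_apply_inr_inr_swap hUp Z)
        (fun _ _ => rfl) (fun _ _ => rfl) (fun _ _ => rfl), sub_self] at h
      exact h.symm
    refine ⟨hbase.1, hbase.2, funext fun ρ => ?_, funext fun l => funext fun k => ?_⟩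
    · simpa [Pi.single_apply, eq_neg_iff_add_eq_zero] using hdefect (Pi.single ρ 1) 0
    · simpa [Pi.single_apply, ite_apply, eq_neg_iff_add_eq_zero]
        using hdefect 0 (Pi.single l (Pi.single k 1))
  · rintro ⟨hx, hXd, rfl, rfl⟩
    refine ⟨⟨hx, hXd⟩, fun xdv W hW _ _ hWU _ => ?_⟩
    rw [← sub_eq_zero, pairing_sub_dT2one_liouvilleForm hb hUp hf hW hWU]
    simp

theorem alpha2_graph
    (Δ : Vec (ι ⊕ (ι ⊕ ι × ι)) → (Fin 1 → Vec (ι ⊕ (ι ⊕ ι × ι))) → ℝ)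
    (hΔ : Δ = fun b w => ∑ ν, (∑ μ, b (Sum.inr (Sum.inr (μ, ν))) * b (Sum.inr (Sum.inl μ)))
        * w 0 (Sum.inl ν))
    (b : Vec (ι ⊕ ι × ι)) (hb : ∀ μ ν, b (Sum.inr (μ, ν)) = - b (Sum.inr (ν, μ)))
    (U : Biv (ι ⊕ ι × ι)) (hU : IsAnti U)
    (hUp : ∀ i μ ν, U i (Sum.inr (μ, ν)) = - U i (Sum.inr (ν, μ)))
    (x' : Vec ι) (Xd : Biv ι) (hXd : IsAnti Xd) (pc : Vec ι) (f : Biv ι) (hf : IsAnti f) :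
    -- the relation `α²_M` ...
    ((x' = b ∘ Sum.inl ∧ Xd = fun μ ν => U (Sum.inl μ) (Sum.inl ν)) ∧
      ∀ (xdv : Vec ι) (W : Biv (ι ⊕ (ι ⊕ ι × ι))), IsAnti W →
        (∀ i μ ν, W i (Sum.inr (Sum.inr (μ, ν))) = - W i (Sum.inr (Sum.inr (ν, μ)))) →
        -- `W` projects onto `u`:
        (∀ μ ν, W (Sum.inl μ) (Sum.inl ν) = U (Sum.inl μ) (Sum.inl ν)) →
        (∀ μ q, W (Sum.inl μ) (Sum.inr (Sum.inr q)) = U (Sum.inl μ) (Sum.inr q)) →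
        (∀ q q', W (Sum.inr (Sum.inr q)) (Sum.inr (Sum.inr q')) = U (Sum.inr q) (Sum.inr q')) →
        -- `W` projects onto a `w ∈ ∧²T(TM)` with `∧²Tτ_M(w) = (x', Ẋ)`;
        -- the duality condition `⟨p̃, κ²_M(w)⟩ = d_T^2 Δ²_M (u, w)`:
        (∑ ρ, pc ρ * xdv ρ) + (1/2 : ℝ) * (∑ l, ∑ k, f l k *
            (W (Sum.inl l) (Sum.inr (Sum.inl k)) - W (Sum.inl k) (Sum.inr (Sum.inl l)))) =
          dT2one Δ (Sum.elim (b ∘ Sum.inl) (Sum.elim xdv (b ∘ Sum.inr)), W))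
    -- ... holds iff the covector is the image of `u` under the coordinate map `α²_M`:
    ↔ (x' = b ∘ Sum.inl ∧ (Xd = fun μ ν => U (Sum.inl μ) (Sum.inl ν)) ∧
        (pc = fun ρ => - ∑ η, U (Sum.inl η) (Sum.inr (η, ρ))) ∧
        (f = fun l k => - b (Sum.inr (l, k)))) :=
  alpha2_graph_general Δ hΔ b hb U hU hUp x' Xd pc f hf

end
end

section
/- The composed relation β²_M ∘ (α²_M)^{-1} : T*(∧²TM) → T*(∧²T*M) is the diffeomorphism given in coordinates by (x^μ, p_{λκ}, f_ρ, q^{νσ}) ∘ β²_M ∘ (α²_M)^{-1} = (x^μ, −f_{λκ}, p_ρ, ẋ^{νσ}); in particular it is a symplectomorphism coinciding with the canonical isomorphism T*E ≅ T*E* for the vector bundle E = ∧²TM, generated by the pairing (1/2) p_{μν} ẋ^{μν}. -/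
noncomputable section

variable {ι : Type} [Fintype ι] [DecidableEq ι]

/-- Model of `T*(∧²TM)` (resp. `T*(∧²T*M)`): a base point of `∧²TM` (resp. `∧²T*M`)
together with covector components; the pairing with a tangent vector `(δx, δm)` is
`∑ c_ρ δx^ρ + (1/2)∑ d_{λκ} δm^{λκ}`. -/
abbrev CotModel (ι : Type) := (Vec ι × Biv ι) × (Vec ι × Biv ι)

/-- Pairing of covector components with tangent components. -/
def covPair [Fintype ι] (c : Vec ι × Biv ι) (v : Vec ι × Biv ι) : ℝ :=
  (∑ ρ, c.1 ρ * v.1 ρ) + (1/2 : ℝ) * ∑ l, ∑ k, c.2 l k * v.2 l k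

/-!
STATEMENT 12: The composed relation `β²_M ∘ (α²_M)^{-1} : T*(∧²TM) → T*(∧²T*M)` is the
diffeomorphism `Φ` given in coordinates by
`(x^μ, p_{λκ}, f_ρ, q^{νσ}) ∘ β²_M ∘ (α²_M)^{-1} = (x^μ, −f_{λκ}, p_ρ, ẋ^{νσ})`;
it is a symplectomorphism coinciding with the canonical isomorphism `T*E ≅ T*E*` for
`E = ∧²TM`, generated by the pairing `(1/2) p_{μν} ẋ^{μν}`.

Here `α²_M, β²_M : ∧²T(∧²T*M) → T*(∧²TM), T*(∧²T*M)` are the coordinate maps obtained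
before (statements 10 and 11); `u`-space points are `(b, U)` with `b : Vec (ι ⊕ ι × ι)`
and `U : Biv (ι ⊕ ι × ι)`.
-/

/-- `Φ` as a continuous linear map. -/
def PhiL (ι : Type) [Fintype ι] [DecidableEq ι] : CotModel ι →L[ℝ] CotModel ι :=
  (((ContinuousLinearMap.fst ℝ (Vec ι) (Biv ι)).comp
      (ContinuousLinearMap.fst ℝ (Vec ι × Biv ι) (Vec ι × Biv ι))).prod
    (-((ContinuousLinearMap.snd ℝ (Vec ι) (Biv ι)).comp
      (ContinuousLinearMap.snd ℝ (Vec ι × Biv ι) (Vec ι × Biv ι))))).prod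
  (((ContinuousLinearMap.fst ℝ (Vec ι) (Biv ι)).comp
      (ContinuousLinearMap.snd ℝ (Vec ι × Biv ι) (Vec ι × Biv ι))).prod
    ((ContinuousLinearMap.snd ℝ (Vec ι) (Biv ι)).comp
      (ContinuousLinearMap.fst ℝ (Vec ι × Biv ι) (Vec ι × Biv ι))))

/-- Coordinate functional `y ↦ y.2.2 μ ν` as a continuous linear map. -/
def cDD (ι : Type) [Fintype ι] [DecidableEq ι] (μ ν : ι) : CotModel ι →L[ℝ] ℝ :=
  (ContinuousLinearMap.proj ν).comp ((ContinuousLinearMap.proj μ).comp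
    (((ContinuousLinearMap.snd ℝ (Vec ι) (Biv ι))).comp
      (ContinuousLinearMap.snd ℝ (Vec ι × Biv ι) (Vec ι × Biv ι))))

/-- Coordinate functional `y ↦ y.1.2 μ ν` as a continuous linear map. -/
def cBB (ι : Type) [Fintype ι] [DecidableEq ι] (μ ν : ι) : CotModel ι →L[ℝ] ℝ :=
  (ContinuousLinearMap.proj ν).comp ((ContinuousLinearMap.proj μ).comp
    (((ContinuousLinearMap.snd ℝ (Vec ι) (Biv ι))).comp
      (ContinuousLinearMap.fst ℝ (Vec ι × Biv ι) (Vec ι × Biv ι))))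

lemma hG (z : CotModel ι) :
    HasFDerivAt (fun y : CotModel ι => (1/2 : ℝ) * ∑ μ, ∑ ν, y.2.2 μ ν * y.1.2 μ ν)
      ((1/2 : ℝ) • ∑ μ : ι, ∑ ν : ι,
        (z.2.2 μ ν • cBB ι μ ν + z.1.2 μ ν • cDD ι μ ν)) z := by
  refine HasFDerivAt.const_mul ?_ _
  refine HasFDerivAt.fun_sum fun μ _ => HasFDerivAt.fun_sum fun ν _ => ?_
  exact ((cDD ι μ ν).hasFDerivAt).mul ((cBB ι μ ν).hasFDerivAt)

lemma hGval (z w : CotModel ι) :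
    fderiv ℝ (fun y : CotModel ι => (1/2 : ℝ) * ∑ μ, ∑ ν, y.2.2 μ ν * y.1.2 μ ν) z w
      = (1/2 : ℝ) * ∑ μ, ∑ ν, (z.2.2 μ ν * w.1.2 μ ν + z.1.2 μ ν * w.2.2 μ ν) := by
  rw [(hG z).fderiv]
  simp [cBB, cDD, Finset.mul_sum]

lemma sum2_congr {ι : Type} [Fintype ι] (f g : ι → ι → ℝ) (h : ∀ l k, f l k = g l k) :
    ∑ l, ∑ k, f l k = ∑ l, ∑ k, g l k :=
  Finset.sum_congr rfl fun l _ => Finset.sum_congr rfl fun k _ => h l k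

theorem beta_alpha_inverse_symplectomorphism
    (A B : (Vec (ι ⊕ ι × ι) × Biv (ι ⊕ ι × ι)) → CotModel ι)
    (hA : A = fun z => ((z.1 ∘ Sum.inl, fun μ ν => z.2 (Sum.inl μ) (Sum.inl ν)),
      ((fun ρ => - ∑ η, z.2 (Sum.inl η) (Sum.inr (η, ρ))),
       (fun l k => - z.1 (Sum.inr (l, k))))))
    (hB : B = fun z => ((z.1 ∘ Sum.inl, fun l k => z.1 (Sum.inr (l, k))),
      ((fun ρ => - ∑ η, z.2 (Sum.inl η) (Sum.inr (η, ρ))),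
       (fun μ ν => z.2 (Sum.inl μ) (Sum.inl ν)))))
    (Φ : CotModel ι → CotModel ι)
    (hΦ : Φ = fun z => ((z.1.1, fun l k => - z.2.2 l k), (z.2.1, z.1.2))) :
    -- `Φ` realizes the composed relation `β²_M ∘ (α²_M)^{-1}` (in particular the level
    -- sets of `α²_M` and `β²_M` coincide):
    (∀ z, B z = Φ (A z)) ∧
    -- it is a diffeomorphism:
    Function.Bijective Φ ∧ ContDiff ℝ (⊤ : ℕ∞) Φ ∧
    -- it is a symplectomorphism for the canonical cotangent symplectic structures:
    (∀ z w1 w2 : CotModel ι,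
      covPair (fderiv ℝ Φ z w1).2 (fderiv ℝ Φ z w2).1
        - covPair (fderiv ℝ Φ z w2).2 (fderiv ℝ Φ z w1).1
      = covPair w1.2 w2.1 - covPair w2.2 w1.1) ∧
    -- it coincides with the canonical isomorphism `T*E ≅ T*E*` generated by the pairing
    -- `G = (1/2) p_{μν} ẋ^{μν}`: the Liouville forms differ by `dG`:
    (∀ z (w : CotModel ι),
      covPair z.2 w.1 =
        covPair (Φ z).2 (fderiv ℝ Φ z w).1 +
          fderiv ℝ (fun y : CotModel ι => (1/2 : ℝ) * ∑ μ, ∑ ν, y.2.2 μ ν * y.1.2 μ ν) z w)  := by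
  have hΦL : Φ = ⇑(PhiL ι) := by rw [hΦ]; rfl
  have hfd : ∀ z, fderiv ℝ Φ z = PhiL ι := by
    intro z; rw [hΦL]; exact ContinuousLinearMap.fderiv _
  refine ⟨?_, ?_, ?_, ?_, ?_⟩
  · intro z
    rw [hA, hB, hΦ]
    refine Prod.ext (Prod.ext rfl ?_) rfl
    funext l k; simp
  · constructor
    · intro a b h
      rw [hΦ] at h
      simp only [Prod.mk.injEq] at h
      obtain ⟨⟨h1, h2⟩, h3, h4⟩ := h
      have h2' : a.2.2 = b.2.2 := by
        funext l k; have := congrFun (congrFun h2 l) k; linarith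
      exact Prod.ext (Prod.ext h1 h4) (Prod.ext h3 h2')
    · intro y
      refine ⟨((y.1.1, y.2.2), (y.2.1, fun l k => - y.1.2 l k)), ?_⟩
      rw [hΦ]; simp
  · rw [hΦL]; exact (PhiL ι).contDiff
  · intro z w1 w2
    simp only [hfd]
    show covPair (w1.2.1, w1.1.2) (w2.1.1, fun l k => - w2.2.2 l k)
        - covPair (w2.2.1, w2.1.2) (w1.1.1, fun l k => - w1.2.2 l k)
      = covPair w1.2 w2.1 - covPair w2.2 w1.1
    simp only [covPair, Finset.mul_sum, mul_neg, Finset.sum_neg_distrib]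
    ring_nf
    have e1 : ∑ x : ι, ∑ y : ι, w1.1.2 x y * w2.2.2 x y * (1 / 2)
        = ∑ x : ι, ∑ y : ι, 1 / 2 * w2.2.2 x y * w1.1.2 x y :=
      sum2_congr _ _ fun l k => by ring
    have e2 : ∑ x : ι, ∑ y : ι, w2.1.2 x y * w1.2.2 x y * (1 / 2)
        = ∑ x : ι, ∑ y : ι, 1 / 2 * w1.2.2 x y * w2.1.2 x y :=
      sum2_congr _ _ fun l k => by ring
    rw [e1, e2]
    ring
  · intro z w
    rw [hGval]
    simp only [hfd]
    rw [hΦ]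
    show covPair z.2 w.1 = covPair (z.2.1, z.1.2) (w.1.1, fun l k => - w.2.2 l k) + _
    simp only [covPair, Finset.mul_sum, mul_neg, Finset.sum_neg_distrib]
    have e3 : ∑ x : ι, ∑ i : ι, (1/2 : ℝ) * (z.2.2 x i * w.1.2 x i + z.1.2 x i * w.2.2 x i)
        = (∑ x : ι, ∑ i : ι, (1/2 : ℝ) * (z.2.2 x i * w.1.2 x i))
          + ∑ x : ι, ∑ i : ι, (1/2 : ℝ) * (z.1.2 x i * w.2.2 x i) := by
      rw [← Finset.sum_add_distrib]
      refine Finset.sum_congr rfl fun x _ => ?_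
      rw [← Finset.sum_add_distrib]
      exact Finset.sum_congr rfl fun i _ => by ring
    rw [e3]; ring


end
end

section
/- For the Liouville 2-form θ²_M = (1/2) p_{μν} dx^μ ∧ dx^ν on ∧²T*M one has: i_T^2 θ²_M = (1/2) p_{μν} ẋ^{μν}, i_T^2 dθ²_M = (1/2) ẋ^{μν} dp_{μν} − y^σ_{σν} dx^ν, and d_T^2 θ²_M = (1/2) p_{μν} dẋ^{μν} + y^σ_{σν} dx^ν, as forms/functions on ∧²T(∧²T*M). -/
/-!
Points of `∧²T(∧²T*M)` are pairs `(b, U)` with `b = (x^μ, p_{μν})` indexed by `ι ⊕ ι × ι`; the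
bivector `U` carries `ẋ^{μν} = U (inl μ) (inl ν)` and `y^σ_{νλ} = U (inl σ) (inr (ν, λ))`, and a
tangent vector `v` has base part `v.1` and bivector part `v.2`.

The Liouville form is linear in the fibre coordinates `p`, so its exterior derivative is the
alternating sum of the form evaluated at the three arguments, and `i_T^2 θ²_M` is a bilinear pairing
of `p` with `ẋ`, whose differential is the sum of its two partial pairings. Contracting against the
coordinate bivectors leaves double sums over `μ, ν`; these collapse to the stated expressions once
each is compared with its transpose, using the antisymmetry of `U`, of `p_{μν}` and of `y^σ_{νλ}`
in `ν, λ`.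
-/

noncomputable section

theorem Dext_eq_of_isLinearMap {A : Type} [NormedAddCommGroup A] [NormedSpace ℝ A]
    [FiniteDimensional ℝ A] {k : ℕ} (φ : A → (Fin k → A) → ℝ)
    (hφ : ∀ w, IsLinearMap ℝ (φ · w)) (x : A) (w : Fin (k + 1) → A) :
    Dext φ x w = ∑ i : Fin (k + 1), (-1 : ℝ) ^ (i : ℕ) * φ (w i) (fun j => w (i.succAbove j)) := by
  refine Finset.sum_congr rfl fun i _ => ?_
  let L : A →L[ℝ] ℝ := LinearMap.toContinuousLinearMap (hφ (fun j => w (i.succAbove j))).mk'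
  rw [show (fun y => φ y (fun j => w (i.succAbove j))) = L from rfl, L.fderiv]
  rfl

theorem fderiv_apply_of_bilinear {E F : Type} [NormedAddCommGroup E] [NormedSpace ℝ E]
    [FiniteDimensional ℝ E] [NormedAddCommGroup F] [NormedSpace ℝ F] [FiniteDimensional ℝ F]
    (B : E →ₗ[ℝ] F →ₗ[ℝ] ℝ) (p q : E × F) :
    fderiv ℝ (fun p : E × F => B p.1 p.2) p q = B p.1 q.2 + B q.1 p.2 :=
  congrArg (· q) ((LinearMap.toContinuousBilinearMap B).isBoundedBilinearMap.fderiv p)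

theorem Dext_iT2_of_isLinearMap {κ : Type} [Fintype κ] [DecidableEq κ]
    (φ : Vec κ → (Fin 2 → Vec κ) → ℝ) (hφ : ∀ w, IsLinearMap ℝ (φ · w))
    (p : Vec κ × Biv κ) (w : Fin 1 → Vec κ × Biv κ) (e : Fin 0 → Vec κ × Biv κ) :
    Dext (iT2 φ) p w = iT2 φ (p.1, (w 0).2) e + iT2 φ ((w 0).1, p.2) e := by
  let B : Vec κ →ₗ[ℝ] Biv κ →ₗ[ℝ] ℝ := LinearMap.mk₂ ℝ (fun x U => iT2 φ (x, U) e)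
    (fun x y U => by simp only [iT2, (hφ _).map_add, mul_add, Finset.sum_add_distrib])
    (fun c x U => by
      simp only [iT2, (hφ _).map_smul, smul_eq_mul, Finset.mul_sum]
      exact Finset.sum_congr rfl fun _ _ => Finset.sum_congr rfl fun _ _ => by ring)
    (fun x U V => by simp only [iT2, Pi.add_apply, add_mul, Finset.sum_add_distrib, mul_add])
    (fun c x U => by
      simp only [iT2, Pi.smul_apply, smul_eq_mul, Finset.mul_sum]
      exact Finset.sum_congr rfl fun _ _ => Finset.sum_congr rfl fun _ _ => by ring)
  have hB (q : Vec κ × Biv κ) : iT2 φ q (fun j => w (Fin.succAbove 0 j)) = B q.1 q.2 := by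
    rw [Subsingleton.elim (fun j => w (Fin.succAbove 0 j)) e]
    rfl
  rw [Dext, Fin.sum_univ_one]
  simp only [Fin.val_zero, pow_zero, one_mul, hB]
  exact fderiv_apply_of_bilinear B p (w 0)

theorem sum_sum_eq_of_add_swap {α M : Type} [Fintype α] [AddCommMonoid M] [IsAddTorsionFree M]
    {f g : α → α → M} (h : ∀ a b, f a b + f b a = g a b + g b a) :
    ∑ a, ∑ b, f a b = ∑ a, ∑ b, g a b := by
  apply IsAddTorsionFree.nsmul_right_injective two_ne_zero
  simp only [two_nsmul]
  conv_lhs => arg 2; rw [Finset.sum_comm]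
  conv_rhs => arg 2; rw [Finset.sum_comm]
  simp only [← Finset.sum_add_distrib, h]

def liouville2 (ι : Type) [Fintype ι] : Vec (ι ⊕ ι × ι) → (Fin 2 → Vec (ι ⊕ ι × ι)) → ℝ :=
  fun b w => (1/2 : ℝ) * ∑ μ, ∑ ν, b (Sum.inr (μ, ν)) *
    (w 0 (Sum.inl μ) * w 1 (Sum.inl ν) - w 1 (Sum.inl μ) * w 0 (Sum.inl ν))

section Liouville

variable {ι : Type} [Fintype ι]

theorem liouville2_isLinearMap (w : Fin 2 → Vec (ι ⊕ ι × ι)) :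
    IsLinearMap ℝ (liouville2 ι · w) where
  map_add x y := by simp only [liouville2, Pi.add_apply, add_mul, Finset.sum_add_distrib, mul_add]
  map_smul c x := by simp only [liouville2, Pi.smul_apply, smul_eq_mul, Finset.mul_sum]; ring_nf

theorem Dext_liouville2 (x : Vec (ι ⊕ ι × ι)) (w : Fin 3 → Vec (ι ⊕ ι × ι)) :
    Dext (liouville2 ι) x w = liouville2 ι (w 0) ![w 1, w 2] - liouville2 ι (w 1) ![w 0, w 2]
      + liouville2 ι (w 2) ![w 0, w 1] := by
  have h0 : (fun j => w (Fin.succAbove 0 j)) = ![w 1, w 2] := by ext j; fin_cases j <;> rfl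
  have h1 : (fun j => w (Fin.succAbove 1 j)) = ![w 0, w 2] := by ext j; fin_cases j <;> rfl
  have h2 : (fun j => w (Fin.succAbove 2 j)) = ![w 0, w 1] := by ext j; fin_cases j <;> rfl
  rw [Dext_eq_of_isLinearMap _ liouville2_isLinearMap, Fin.sum_univ_three, h0, h1, h2]
  norm_num [sub_eq_add_neg]

variable [DecidableEq ι]

theorem iT2_liouville2 (p : Vec (ι ⊕ ι × ι) × Biv (ι ⊕ ι × ι))
    (e : Fin 0 → Vec (ι ⊕ ι × ι) × Biv (ι ⊕ ι × ι)) :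
    iT2 (liouville2 ι) p e = (1/4 : ℝ) * ∑ μ, ∑ ν, p.2 (Sum.inl μ) (Sum.inl ν) *
      (p.1 (Sum.inr (μ, ν)) - p.1 (Sum.inr (ν, μ))) := by
  simp only [iT2, one_div, liouville2, Matrix.cons_val', Pi.single_apply, Matrix.cons_val_fin_one,
    Matrix.cons_val_zero, Matrix.cons_val_one, mul_ite, mul_one, mul_zero, mul_sub,
    Finset.sum_sub_distrib, Finset.mul_sum, Fintype.sum_sum_type, Sum.inl.injEq, Finset.sum_ite_eq',
    Finset.mem_univ, ↓reduceIte, reduceCtorEq, Finset.sum_const_zero, add_zero, ite_self]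
  ring_nf

theorem iT2_liouville2_of_isAnti (x : Vec (ι ⊕ ι × ι)) {U : Biv (ι ⊕ ι × ι)} (hU : IsAnti U)
    (e : Fin 0 → Vec (ι ⊕ ι × ι) × Biv (ι ⊕ ι × ι)) :
    iT2 (liouville2 ι) (x, U) e =
      (1/2 : ℝ) * ∑ μ, ∑ ν, x (Sum.inr (μ, ν)) * U (Sum.inl μ) (Sum.inl ν) := by
  rw [iT2_liouville2]
  simp only [Finset.mul_sum]
  refine sum_sum_eq_of_add_swap fun μ ν => ?_
  rw [hU (Sum.inl μ) (Sum.inl ν)]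
  ring

theorem iT2_liouville2_of_antisymm {x : Vec (ι ⊕ ι × ι)}
    (hx : ∀ μ ν, x (Sum.inr (μ, ν)) = - x (Sum.inr (ν, μ))) (U : Biv (ι ⊕ ι × ι))
    (e : Fin 0 → Vec (ι ⊕ ι × ι) × Biv (ι ⊕ ι × ι)) :
    iT2 (liouville2 ι) (x, U) e =
      (1/2 : ℝ) * ∑ μ, ∑ ν, x (Sum.inr (μ, ν)) * U (Sum.inl μ) (Sum.inl ν) := by
  rw [iT2_liouville2]
  simp only [Finset.mul_sum]
  refine Finset.sum_congr rfl fun μ _ => Finset.sum_congr rfl fun ν _ => ?_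
  rw [hx ν μ]
  ring

theorem iT2_Dext_liouville2 {U : Biv (ι ⊕ ι × ι)} (hU : IsAnti U)
    (hUp : ∀ i μ ν, U i (Sum.inr (μ, ν)) = - U i (Sum.inr (ν, μ)))
    (x : Vec (ι ⊕ ι × ι)) (v : Vec (ι ⊕ ι × ι) × Biv (ι ⊕ ι × ι))
    (e : Fin 0 → Vec (ι ⊕ ι × ι) × Biv (ι ⊕ ι × ι)) :
    iT2 (Dext (liouville2 ι)) (x, U) (Matrix.vecCons v e) =
      (1/2 : ℝ) * (∑ μ, ∑ ν, U (Sum.inl μ) (Sum.inl ν) * v.1 (Sum.inr (μ, ν)))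
        - ∑ ν, (∑ σ, U (Sum.inl σ) (Sum.inr (σ, ν))) * v.1 (Sum.inl ν) := by
  simp only [iT2, one_div, Matrix.cons_val_fin_one, Dext_liouville2, liouville2, Matrix.cons_val',
    Pi.single_apply, Matrix.cons_val_zero, Matrix.cons_val_one, Matrix.cons_val, ite_mul, one_mul,
    zero_mul, mul_ite, mul_one, mul_zero, mul_sub, Finset.sum_sub_distrib, Finset.sum_ite_irrel,
    Finset.sum_const_zero, Finset.mul_sum, Fintype.sum_sum_type, Sum.inl.injEq, Finset.sum_ite_eq',
    Finset.mem_univ, ↓reduceIte, reduceCtorEq, ite_self, sub_self, sub_zero, Sum.inr.injEq, zero_sub,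
    neg_sub, add_zero, Fintype.sum_prod_type, Prod.mk.injEq, ite_and, zero_add, Finset.sum_ite_eq,
    Finset.sum_mul]
  simp only [Finset.mul_sum, ← Finset.sum_add_distrib, ← Finset.sum_sub_distrib]
  refine sum_sum_eq_of_add_swap fun μ ν => ?_
  simp only [hU (Sum.inr _) (Sum.inl _)]
  rw [hUp (Sum.inl μ) ν μ, hUp (Sum.inl ν) μ ν, hU (Sum.inl ν) (Sum.inl μ)]
  ring

end Liouville

theorem liouville_two_form_lifts_general {ι : Type} [Fintype ι] [DecidableEq ι]
    (θ : Vec (ι ⊕ ι × ι) → (Fin 2 → Vec (ι ⊕ ι × ι)) → ℝ)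
    (hθ : θ = fun b w => (1/2 : ℝ) * ∑ μ, ∑ ν, b (Sum.inr (μ, ν)) *
      (w 0 (Sum.inl μ) * w 1 (Sum.inl ν) - w 1 (Sum.inl μ) * w 0 (Sum.inl ν)))
    (b : Vec (ι ⊕ ι × ι)) (hb : ∀ μ ν, b (Sum.inr (μ, ν)) = - b (Sum.inr (ν, μ)))
    (U : Biv (ι ⊕ ι × ι)) (hU : IsAnti U)
    (hUp : ∀ i μ ν, U i (Sum.inr (μ, ν)) = - U i (Sum.inr (ν, μ)))
    (v : Vec (ι ⊕ ι × ι) × Biv (ι ⊕ ι × ι)) :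
    -- `i_T^2 θ²_M = (1/2) p_{μν} ẋ^{μν}`:
    iT2 θ (b, U) (fun i => i.elim0) =
      (1/2 : ℝ) * ∑ μ, ∑ ν, b (Sum.inr (μ, ν)) * U (Sum.inl μ) (Sum.inl ν) ∧
    -- `i_T^2 dθ²_M = (1/2) ẋ^{μν} dp_{μν} − y^σ_{σν} dx^ν`:
    iT2 (Dext θ) (b, U) (Matrix.vecCons v (fun i => i.elim0)) =
      (1/2 : ℝ) * (∑ μ, ∑ ν, U (Sum.inl μ) (Sum.inl ν) * v.1 (Sum.inr (μ, ν)))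
        - ∑ ν, (∑ σ, U (Sum.inl σ) (Sum.inr (σ, ν))) * v.1 (Sum.inl ν) ∧
    -- `d_T^2 θ²_M = (1/2) p_{μν} dẋ^{μν} + y^σ_{σν} dx^ν`:
    dT2 θ (b, U) (Matrix.vecCons v (fun i => i.elim0)) =
      (1/2 : ℝ) * (∑ μ, ∑ ν, b (Sum.inr (μ, ν)) * v.2 (Sum.inl μ) (Sum.inl ν))
        + ∑ ν, (∑ σ, U (Sum.inl σ) (Sum.inr (σ, ν))) * v.1 (Sum.inl ν) := by
  obtain rfl : θ = liouville2 ι := hθ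
  have hDθ := iT2_Dext_liouville2 hU hUp b v (fun i => i.elim0)
  refine ⟨iT2_liouville2_of_isAnti b hU _, hDθ, ?_⟩
  have hdθ := Dext_iT2_of_isLinearMap _ liouville2_isLinearMap (b, U)
    (Matrix.vecCons v (fun i => i.elim0)) (fun i => i.elim0)
  simp only [Matrix.cons_val_zero, iT2_liouville2_of_antisymm hb,
    iT2_liouville2_of_isAnti _ hU, mul_comm (v.1 _)] at hdθ
  rw [dT2, hdθ, hDθ]
  ring

theorem liouville_two_form_lifts {ι : Type} [Fintype ι] [DecidableEq ι]
    (θ : Vec (ι ⊕ ι × ι) → (Fin 2 → Vec (ι ⊕ ι × ι)) → ℝ)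
    (hθ : θ = fun b w => (1/2 : ℝ) * ∑ μ, ∑ ν, b (Sum.inr (μ, ν)) *
      (w 0 (Sum.inl μ) * w 1 (Sum.inl ν) - w 1 (Sum.inl μ) * w 0 (Sum.inl ν)))
    (b : Vec (ι ⊕ ι × ι)) (hb : ∀ μ ν, b (Sum.inr (μ, ν)) = - b (Sum.inr (ν, μ)))
    (U : Biv (ι ⊕ ι × ι)) (hU : IsAnti U)
    (hUp : ∀ i μ ν, U i (Sum.inr (μ, ν)) = - U i (Sum.inr (ν, μ)))
    (v : Vec (ι ⊕ ι × ι) × Biv (ι ⊕ ι × ι))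
    (hv1 : ∀ μ ν, v.1 (Sum.inr (μ, ν)) = - v.1 (Sum.inr (ν, μ)))
    (hv2 : IsAnti v.2)
    (hv2p : ∀ i μ ν, v.2 i (Sum.inr (μ, ν)) = - v.2 i (Sum.inr (ν, μ))) :
    -- `i_T^2 θ²_M = (1/2) p_{μν} ẋ^{μν}`:
    iT2 θ (b, U) (fun i => i.elim0) =
      (1/2 : ℝ) * ∑ μ, ∑ ν, b (Sum.inr (μ, ν)) * U (Sum.inl μ) (Sum.inl ν) ∧
    -- `i_T^2 dθ²_M = (1/2) ẋ^{μν} dp_{μν} − y^σ_{σν} dx^ν`: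
    iT2 (Dext θ) (b, U) (Matrix.vecCons v (fun i => i.elim0)) =
      (1/2 : ℝ) * (∑ μ, ∑ ν, U (Sum.inl μ) (Sum.inl ν) * v.1 (Sum.inr (μ, ν)))
        - ∑ ν, (∑ σ, U (Sum.inl σ) (Sum.inr (σ, ν))) * v.1 (Sum.inl ν) ∧
    -- `d_T^2 θ²_M = (1/2) p_{μν} dẋ^{μν} + y^σ_{σν} dx^ν`:
    dT2 θ (b, U) (Matrix.vecCons v (fun i => i.elim0)) =
      (1/2 : ℝ) * (∑ μ, ∑ ν, b (Sum.inr (μ, ν)) * v.2 (Sum.inl μ) (Sum.inl ν))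
        + ∑ ν, (∑ σ, U (Sum.inl σ) (Sum.inr (σ, ν))) * v.1 (Sum.inl ν) :=
  liouville_two_form_lifts_general θ hθ b hb U hU hUp v

end
end

section
/- For the Lagrangian L: ∧²TM → ℝ with L(w) = √(h_{μνκλ} ẋ^{μν} ẋ^{κλ}), where h_{μνκλ} = (1/2)(g_{μκ}g_{νλ} − g_{μλ}g_{νκ}) comes from a pseudo-Riemannian metric g on M, the dynamics D = (α²_M)^{-1}(dL(∧²TM)) ⊂ ∧²T(∧²T*M) is given by the equations y^α_{αν} = −(1/(2ρ)) (∂h_{μκλσ}/∂x^ν) ẋ^{μκ} ẋ^{λσ} and p_{μν} = −(1/ρ) h_{μνλκ} ẋ^{λκ}, with ρ = √(h_{μνλκ} ẋ^{μν} ẋ^{λκ}). -/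
noncomputable section

/-!
STATEMENT 16: For the Nambu–Goto Lagrangian `L(w) = √(h_{μνκλ} ẋ^{μν} ẋ^{κλ})`, with
`h_{μνκλ} = (1/2)(g_{μκ}g_{νλ} − g_{μλ}g_{νκ})` induced by a (pseudo-)metric `g` on `M`,
the dynamics `D = (α²_M)^{-1}(dL(∧²TM)) ⊂ ∧²T(∧²T*M)` is given by
`y^α_{αν} = −(1/(2ρ)) (∂h_{μκλσ}/∂x^ν) ẋ^{μκ} ẋ^{λσ}` and
`p_{μν} = −(1/ρ) h_{μνλκ} ẋ^{λκ}`, where `ρ = √(h_{μνλκ} ẋ^{μν} ẋ^{λκ})`.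

`α²_M` is the coordinate map `(x^μ, ẋ^{νσ}, p_ρ, f_{λκ}) ∘ α²_M =
(x^μ, ẋ^{νσ}, −y^η_{ηρ}, −p_{λκ})`; a covector `(x, ẋ, pc, f)` lies on `dL(∧²TM)` iff
`pc_ρ = ∂L/∂x^ρ` and `f_{λκ} = ∂L/∂ẋ^{λκ}`.
-/

set_option maxHeartbeats 1600000 in
theorem nambu_goto_dynamics {ι : Type} [Fintype ι] [DecidableEq ι]
    (g : Vec ι → ι → ι → ℝ) (hg : ∀ μ ν, ContDiff ℝ (⊤ : ℕ∞) (fun x => g x μ ν))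
    (hgsym : ∀ x μ ν, g x μ ν = g x ν μ)
    (h : Vec ι → ι → ι → ι → ι → ℝ)
    (hh : h = fun x μ ν κ l => (1/2 : ℝ) * (g x μ κ * g x ν l - g x μ l * g x ν κ))
    (L : Vec ι → Biv ι → ℝ)
    (hL : L = fun x m => Real.sqrt (∑ μ, ∑ ν, ∑ κ, ∑ l, h x μ ν κ l * m μ ν * m κ l))
    -- a point of `∧²T(∧²T*M)`:
    (b : Vec (ι ⊕ ι × ι)) (hb : ∀ μ ν, b (Sum.inr (μ, ν)) = - b (Sum.inr (ν, μ)))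
    (U : Biv (ι ⊕ ι × ι)) (hU : IsAnti U)
    (hUp : ∀ i μ ν, U i (Sum.inr (μ, ν)) = - U i (Sum.inr (ν, μ)))
    (x : Vec ι) (hx : x = b ∘ Sum.inl)
    (xd : Biv ι) (hxd : xd = fun μ ν => U (Sum.inl μ) (Sum.inl ν))
    (ρ : ℝ) (hρ : ρ = Real.sqrt (∑ μ, ∑ ν, ∑ κ, ∑ l, h x μ ν κ l * xd μ ν * xd κ l))
    (hpos : 0 < ρ) :
    -- `u ∈ D`, i.e. `α²_M(u) ∈ dL(∧²TM)` ...
    (((fun r => - ∑ η, U (Sum.inl η) (Sum.inr (η, r))) =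
        fun r => fderiv ℝ (fun y => L y xd) x (Pi.single r 1)) ∧
     ((fun l k => - b (Sum.inr (l, k))) =
        fun l k => fderiv ℝ (fun m => L x m) xd (Pi.single l (Pi.single k 1))))
    -- ... iff the Lagrange phase equations hold:
    ↔ ((∀ ν, ∑ η, U (Sum.inl η) (Sum.inr (η, ν)) =
          - (1 / (2 * ρ)) * ∑ μ, ∑ κ, ∑ l, ∑ σ,
            fderiv ℝ (fun y => h y μ κ l σ) x (Pi.single ν 1) * xd μ κ * xd l σ) ∧
       (∀ μ ν, b (Sum.inr (μ, ν)) =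

          - (1 / ρ) * ∑ l, ∑ κ, h x μ ν l κ * xd l κ)) := by
  -- symmetry of `h` in its two index pairs
  have hsymm : ∀ μ ν κ l, h x κ l μ ν = h x μ ν κ l := by
    intro μ ν κ l
    simp only [hh]
    rw [hgsym x κ μ, hgsym x l ν, hgsym x κ ν, hgsym x l μ]
    ring
  have hdg : ∀ μ ν, DifferentiableAt ℝ (fun y => g y μ ν) x :=
    fun μ ν => ((hg μ ν).differentiable (by simp)).differentiableAt
  have hdh : ∀ μ ν κ l, DifferentiableAt ℝ (fun y => h y μ ν κ l) x := by
    intro μ ν κ l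
    simp only [hh]
    exact (((hdg μ κ).mul (hdg ν l)).sub ((hdg μ l).mul (hdg ν κ))).const_mul _
  set S : Vec ι → ℝ := fun y => ∑ μ, ∑ ν, ∑ κ, ∑ l, h y μ ν κ l * xd μ ν * xd κ l
    with hSdef
  have hρS : ρ = Real.sqrt (S x) := hρ
  have hSpos : 0 < S x := by
    rw [hρS] at hpos
    exact Real.sqrt_pos.mp hpos
  -- derivative of `S` in the base variable
  have hS' : HasFDerivAt S
      (∑ μ, ∑ ν, ∑ κ, ∑ l,
        xd κ l • (xd μ ν • fderiv ℝ (fun y => h y μ ν κ l) x)) x := by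
    refine HasFDerivAt.fun_sum fun μ _ => HasFDerivAt.fun_sum fun ν _ =>
      HasFDerivAt.fun_sum fun κ _ => HasFDerivAt.fun_sum fun l _ => ?_
    exact (((hdh μ ν κ l).hasFDerivAt).mul_const (xd μ ν)).mul_const (xd κ l)
  have hLx : HasFDerivAt (fun y => Real.sqrt (S y))
      ((1 / (2 * Real.sqrt (S x))) •
        (∑ μ, ∑ ν, ∑ κ, ∑ l,
          xd κ l • (xd μ ν • fderiv ℝ (fun y => h y μ ν κ l) x))) x :=
    hS'.sqrt (ne_of_gt hSpos)
  have fact1 : ∀ r, fderiv ℝ (fun y => L y xd) x (Pi.single r 1)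
      = (1 / (2 * ρ)) * ∑ μ, ∑ κ, ∑ l, ∑ σ,
          fderiv ℝ (fun y => h y μ κ l σ) x (Pi.single r 1) * xd μ κ * xd l σ := by
    intro r
    have hfun : (fun y => L y xd) = fun y => Real.sqrt (S y) := by
      rw [hL]
    rw [hfun, hLx.fderiv]
    simp only [ContinuousLinearMap.coe_smul', Pi.smul_apply,
      ContinuousLinearMap.coe_sum', Finset.sum_apply,
      ContinuousLinearMap.smul_apply, smul_eq_mul, ← hρS]
    congr 1
    refine Finset.sum_congr rfl fun μ _ => Finset.sum_congr rfl fun ν _ =>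
      Finset.sum_congr rfl fun κ _ => Finset.sum_congr rfl fun l _ => ?_
    ring
  -- derivative in the fibre variable
  set pr : ι → ι → (Biv ι →L[ℝ] ℝ) := fun μ ν =>
    (ContinuousLinearMap.proj ν).comp
      (ContinuousLinearMap.proj (R := ℝ) (φ := fun _ : ι => Vec ι) μ) with hprdef
  have hprapp : ∀ μ ν (m : Biv ι), pr μ ν m = m μ ν := fun _ _ _ => rfl
  have hprd : ∀ μ ν, HasFDerivAt (fun m : Biv ι => m μ ν) (pr μ ν) xd :=
    fun μ ν => (pr μ ν).hasFDerivAt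
  set Q : Biv ι → ℝ := fun m => ∑ μ, ∑ ν, ∑ κ, ∑ l, h x μ ν κ l * m μ ν * m κ l
    with hQdef
  have hQx : Q xd = S x := rfl
  have hQ' : HasFDerivAt Q
      (∑ μ, ∑ ν, ∑ κ, ∑ l,
        ((h x μ ν κ l * xd μ ν) • pr κ l + xd κ l • (h x μ ν κ l • pr μ ν))) xd := by
    refine HasFDerivAt.fun_sum fun μ _ => HasFDerivAt.fun_sum fun ν _ =>
      HasFDerivAt.fun_sum fun κ _ => HasFDerivAt.fun_sum fun l _ => ?_
    exact ((hprd μ ν).const_mul (h x μ ν κ l)).mul (hprd κ l)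
  have hLv : HasFDerivAt (fun m => Real.sqrt (Q m))
      ((1 / (2 * Real.sqrt (Q xd))) •
        (∑ μ, ∑ ν, ∑ κ, ∑ l,
          ((h x μ ν κ l * xd μ ν) • pr κ l + xd κ l • (h x μ ν κ l • pr μ ν)))) xd := by
    refine hQ'.sqrt ?_
    rw [hQx]; exact ne_of_gt hSpos
  have fact2 : ∀ a c, fderiv ℝ (fun m => L x m) xd (Pi.single a (Pi.single c 1))
      = (1 / ρ) * ∑ l, ∑ κ, h x a c l κ * xd l κ := by
    intro a c
    have hfun : (fun m => L x m) = fun m => Real.sqrt (Q m) := by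
      rw [hL]
    rw [hfun, hLv.fderiv]
    have happ : ∀ κ l, (Pi.single a (Pi.single c (1:ℝ)) : Biv ι) κ l
        = (if κ = a then (if l = c then (1:ℝ) else 0) else 0) := by
      intro κ l
      by_cases hka : κ = a
      · subst hka
        simp [Pi.single_apply]
      · simp [Pi.single_apply, hka]
    simp only [ContinuousLinearMap.coe_smul', Pi.smul_apply,
      ContinuousLinearMap.coe_sum', Finset.sum_apply,
      ContinuousLinearMap.add_apply, ContinuousLinearMap.smul_apply,
      smul_eq_mul, hprapp, happ]
    rw [hQx, ← hρS]
    have e1 : ∀ μ ν : ι, (∑ κ, ∑ l, ((h x μ ν κ l * xd μ ν) *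
          (if κ = a then (if l = c then (1:ℝ) else 0) else 0)
          + xd κ l * (h x μ ν κ l *
            (if μ = a then (if ν = c then (1:ℝ) else 0) else 0))))
        = h x μ ν a c * xd μ ν
          + (if μ = a then (if ν = c then (1:ℝ) else 0) else 0) *
              ∑ κ, ∑ l, h x μ ν κ l * xd κ l := by
      intro μ ν
      simp only [Finset.sum_add_distrib]
      congr 1
      · simp [mul_ite, mul_zero, Finset.sum_ite_eq, Finset.sum_ite_eq']
      · rw [Finset.mul_sum]
        refine Finset.sum_congr rfl fun κ _ => ?_
        rw [Finset.mul_sum]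
        refine Finset.sum_congr rfl fun l _ => ?_
        ring
    calc (1 / (2 * ρ)) * ∑ μ, ∑ ν, ∑ κ, ∑ l, ((h x μ ν κ l * xd μ ν) *
          (if κ = a then (if l = c then (1:ℝ) else 0) else 0)
          + xd κ l * (h x μ ν κ l *
            (if μ = a then (if ν = c then (1:ℝ) else 0) else 0)))
        = (1 / (2 * ρ)) * ∑ μ, ∑ ν, (h x μ ν a c * xd μ ν
            + (if μ = a then (if ν = c then (1:ℝ) else 0) else 0) *
              ∑ κ, ∑ l, h x μ ν κ l * xd κ l) := by
          congr 1
          exact Finset.sum_congr rfl fun μ _ => Finset.sum_congr rfl fun ν _ => e1 μ ν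
      _ = (1 / (2 * ρ)) * ((∑ μ, ∑ ν, h x a c μ ν * xd μ ν)
            + ∑ κ, ∑ l, h x a c κ l * xd κ l) := by
          simp only [Finset.sum_add_distrib]
          congr 1
          congr 1
          · refine Finset.sum_congr rfl fun μ _ => Finset.sum_congr rfl fun ν _ => ?_
            rw [hsymm]
          · simp [ite_mul, zero_mul, one_mul, Finset.sum_ite_eq, Finset.sum_ite_eq']
      _ = (1 / ρ) * ∑ l, ∑ κ, h x a c l κ * xd l κ := by
          field_simp
          ring
  constructor
  · rintro ⟨h1, h2⟩
    refine ⟨fun ν => ?_, fun μ ν => ?_⟩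
    · have := congrFun h1 ν
      rw [fact1 ν] at this
      linarith
    · have := congrFun (congrFun h2 μ) ν
      rw [fact2 μ ν] at this
      linarith
  · rintro ⟨h1, h2⟩
    constructor
    · funext r
      rw [fact1 r]
      have := h1 r
      linarith
    · funext a c
      rw [fact2 a c]
      have := h2 a c
      linarith

end
end

section
/- Let z: ℝ² → ℝ be smooth, and set ρ = √(1 + z_x² + z_y²). Define for k=1,2,3 and the substitutions ẋ^{12}=1, ẋ^{13}=z_y, ẋ^{23}=−z_x (with ẋ^{ij} antisymmetric) the Euler–Lagrange expressions (E_k): ∂_y(ẋ^{1k}/ρ) + z_x ∂_y(ẋ^{3k}/ρ) − ∂_x(ẋ^{2k}/ρ) − z_y ∂_x(ẋ^{3k}/ρ) = 0. Then (E_3) is equivalent to the minimal surface equation ∂_x(z_x/ρ) + ∂_y(z_y/ρ) = 0, and (E_3) implies (E_1) and (E_2). -/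
noncomputable section

/-!
STATEMENT 17: For a smooth `z : ℝ² → ℝ`, `ρ = √(1 + z_x² + z_y²)`, and the substitutions
`ẋ^{12} = 1`, `ẋ^{13} = z_y`, `ẋ^{23} = −z_x` (antisymmetric in the indices), define the
Euler–Lagrange expressions
`(E_k): ∂_y(ẋ^{1k}/ρ) + z_x ∂_y(ẋ^{3k}/ρ) − ∂_x(ẋ^{2k}/ρ) − z_y ∂_x(ẋ^{3k}/ρ) = 0`
for `k = 1,2,3`. Then `(E_3)` is equivalent to the minimal surface equation
`∂_x(z_x/ρ) + ∂_y(z_y/ρ) = 0`, and `(E_3)` implies `(E_1)` and `(E_2)`.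
-/

/-- `∂/∂x` of a function on `ℝ²`. -/
def px (f : ℝ × ℝ → ℝ) (q : ℝ × ℝ) : ℝ := fderiv ℝ f q (1, 0)
/-- `∂/∂y` of a function on `ℝ²`. -/
def py (f : ℝ × ℝ → ℝ) (q : ℝ × ℝ) : ℝ := fderiv ℝ f q (0, 1)

theorem plateau_euler_lagrange
    (z : ℝ × ℝ → ℝ) (hz : ContDiff ℝ (⊤ : ℕ∞) z)
    (zx zy ρ : ℝ × ℝ → ℝ) (hzx : zx = px z) (hzy : zy = py z)
    (hρ : ρ = fun q => Real.sqrt (1 + zx q ^ 2 + zy q ^ 2))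
    (X : Fin 3 → Fin 3 → (ℝ × ℝ) → ℝ)
    (hXa : ∀ i j, X i j = fun q => - X j i q)
    (hX01 : X 0 1 = fun _ => 1) (hX02 : X 0 2 = zy) (hX12 : X 1 2 = fun q => - zx q)
    (E : Fin 3 → (ℝ × ℝ) → ℝ)
    (hE : E = fun k q =>
      py (fun q' => X 0 k q' / ρ q') q + zx q * py (fun q' => X 2 k q' / ρ q') q
      - px (fun q' => X 1 k q' / ρ q') q - zy q * px (fun q' => X 2 k q' / ρ q') q) :
    -- `(E_3)` is (pointwise) equivalent to the minimal surface equation: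
    (∀ q, E 2 q = 0 ↔ px (fun q' => zx q' / ρ q') q + py (fun q' => zy q' / ρ q') q = 0) ∧
    -- and `(E_3)` implies `(E_1)` and `(E_2)`:
    ((∀ q, E 2 q = 0) → ∀ q, E 0 q = 0 ∧ E 1 q = 0) := by
  have hX22 : X 2 2 = fun _ => (0:ℝ) := by
    funext p; have h : X 2 2 p = -X 2 2 p := congrFun (hXa 2 2) p; linarith
  have hX11 : X 1 1 = fun _ => (0:ℝ) := by
    funext p; have h : X 1 1 p = -X 1 1 p := congrFun (hXa 1 1) p; linarith
  have hX00 : X 0 0 = fun _ => (0:ℝ) := by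
    funext p; have h : X 0 0 p = -X 0 0 p := congrFun (hXa 0 0) p; linarith
  have hX10 : X 1 0 = fun _ => (-1:ℝ) := by rw [hXa 1 0, hX01]
  have hX20 : X 2 0 = fun p => -zy p := by rw [hXa 2 0, hX02]
  have hX21 : X 2 1 = fun p => zx p := by
    rw [hXa 2 1, hX12]; funext p; simp
  have hfd : ContDiff ℝ (⊤ : ℕ∞) (fderiv ℝ z) := hz.fderiv_right (by simp)
  have hdzx : Differentiable ℝ zx := by
    rw [hzx]
    exact (((ContinuousLinearMap.apply ℝ ℝ (((1:ℝ),(0:ℝ)) : ℝ × ℝ)).contDiff.comp hfd).differentiable (by simp))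
  have hdzy : Differentiable ℝ zy := by
    rw [hzy]
    exact (((ContinuousLinearMap.apply ℝ ℝ (((0:ℝ),(1:ℝ)) : ℝ × ℝ)).contDiff.comp hfd).differentiable (by simp))
  have main : ∀ q, (E 2 q = px (fun q' => zx q' / ρ q') q + py (fun q' => zy q' / ρ q') q)
      ∧ E 0 q = -zx q * E 2 q ∧ E 1 q = -zy q * E 2 q := by
    intro q
    have hs0 : (0:ℝ) < 1 + zx q ^ 2 + zy q ^ 2 := by positivity
    have hrq : ρ q = Real.sqrt (1 + zx q ^ 2 + zy q ^ 2) := by rw [hρ]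
    have hrpos : 0 < ρ q := by rw [hrq]; exact Real.sqrt_pos.mpr hs0
    have hr2 : ρ q ^ 2 = 1 + zx q ^ 2 + zy q ^ 2 := by
      rw [hrq]; exact Real.sq_sqrt hs0.le
    have hg : HasFDerivAt (fun p => 1 + zx p ^ 2 + zy p ^ 2)
        (0 + (zx q • fderiv ℝ zx q + zx q • fderiv ℝ zx q)
          + (zy q • fderiv ℝ zy q + zy q • fderiv ℝ zy q)) q := by
      have h := ((hasFDerivAt_const (1:ℝ) q).add
          (((hdzx q).hasFDerivAt).mul ((hdzx q).hasFDerivAt))).add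
          (((hdzy q).hasFDerivAt).mul ((hdzy q).hasFDerivAt))
      have hfun : (fun p => 1 + zx p ^ 2 + zy p ^ 2)
          = fun p => 1 + zx p * zx p + zy p * zy p := by
        funext p; ring
      rw [hfun]; exact h
    have hρ' : HasFDerivAt ρ ((1 / (2 * Real.sqrt (1 + zx q ^ 2 + zy q ^ 2))) •
        (0 + (zx q • fderiv ℝ zx q + zx q • fderiv ℝ zx q)
          + (zy q • fderiv ℝ zy q + zy q • fderiv ℝ zy q))) q := by
      have h := (Real.hasDerivAt_sqrt hs0.ne').comp_hasFDerivAt q hg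
      rw [hρ]; exact h
    have hsne : Real.sqrt (1 + zx q ^ 2 + zy q ^ 2) ≠ 0 := by positivity
    have hρx : px ρ q = (zx q * px zx q + zy q * px zy q) / ρ q := by
      simp only [px, hρ'.fderiv, ContinuousLinearMap.smul_apply, ContinuousLinearMap.add_apply,
        ContinuousLinearMap.zero_apply, smul_eq_mul]
      rw [hrq]
      field_simp
      ring
    have hρy : py ρ q = (zx q * py zx q + zy q * py zy q) / ρ q := by
      simp only [py, hρ'.fderiv, ContinuousLinearMap.smul_apply, ContinuousLinearMap.add_apply,
        ContinuousLinearMap.zero_apply, smul_eq_mul]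
      rw [hrq]
      field_simp
      ring
    have hρd : HasFDerivAt ρ (fderiv ℝ ρ q) q := hρ'.differentiableAt.hasFDerivAt
    have hdivAt : ∀ (f : ℝ × ℝ → ℝ) (Lf : (ℝ × ℝ) →L[ℝ] ℝ), HasFDerivAt f Lf q →
        HasFDerivAt (fun p => f p / ρ p)
          (f q • ((-(ρ q ^ 2)⁻¹) • fderiv ℝ ρ q) + (ρ q)⁻¹ • Lf) q := by
      intro f Lf hf
      have hinv : HasFDerivAt (fun p => (ρ p)⁻¹) ((-(ρ q ^ 2)⁻¹) • fderiv ℝ ρ q) q :=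
        (hasDerivAt_inv hrpos.ne').comp_hasFDerivAt q hρd
      have h := hf.mul hinv
      simpa [div_eq_mul_inv, Pi.mul_def] using h
    have hdivx : ∀ (f : ℝ × ℝ → ℝ) (Lf : (ℝ × ℝ) →L[ℝ] ℝ), HasFDerivAt f Lf q →
        px (fun p => f p / ρ p) q = (Lf (1,0) * ρ q - f q * px ρ q) / ρ q ^ 2 := by
      intro f Lf hf
      simp only [px, (hdivAt f Lf hf).fderiv, ContinuousLinearMap.add_apply,
        ContinuousLinearMap.smul_apply, smul_eq_mul]
      field_simp
      ring
    have hdivy : ∀ (f : ℝ × ℝ → ℝ) (Lf : (ℝ × ℝ) →L[ℝ] ℝ), HasFDerivAt f Lf q →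
        py (fun p => f p / ρ p) q = (Lf (0,1) * ρ q - f q * py ρ q) / ρ q ^ 2 := by
      intro f Lf hf
      simp only [py, (hdivAt f Lf hf).fderiv, ContinuousLinearMap.add_apply,
        ContinuousLinearMap.smul_apply, smul_eq_mul]
      field_simp
      ring
    have v0x : px (fun q' => (0:ℝ) / ρ q') q = 0 := by simp [px, zero_div]
    have v0y : py (fun q' => (0:ℝ) / ρ q') q = 0 := by simp [py, zero_div]
    have vzxx : px (fun q' => zx q' / ρ q') q
        = (px zx q * ρ q - zx q * px ρ q) / ρ q ^ 2 := hdivx _ _ (hdzx q).hasFDerivAt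
    have vzxy : py (fun q' => zx q' / ρ q') q
        = (py zx q * ρ q - zx q * py ρ q) / ρ q ^ 2 := hdivy _ _ (hdzx q).hasFDerivAt
    have vzyy : py (fun q' => zy q' / ρ q') q
        = (py zy q * ρ q - zy q * py ρ q) / ρ q ^ 2 := hdivy _ _ (hdzy q).hasFDerivAt
    have vnzxx : px (fun q' => -zx q' / ρ q') q
        = (-(px zx q) * ρ q - (-(zx q)) * px ρ q) / ρ q ^ 2 :=
      hdivx _ _ (hdzx q).hasFDerivAt.neg
    have vnzyx : px (fun q' => -zy q' / ρ q') q
        = (-(px zy q) * ρ q - (-(zy q)) * px ρ q) / ρ q ^ 2 :=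
      hdivx _ _ (hdzy q).hasFDerivAt.neg
    have vnzyy : py (fun q' => -zy q' / ρ q') q
        = (-(py zy q) * ρ q - (-(zy q)) * py ρ q) / ρ q ^ 2 :=
      hdivy _ _ (hdzy q).hasFDerivAt.neg
    have v1y : py (fun q' => (1:ℝ) / ρ q') q = (0 * ρ q - 1 * py ρ q) / ρ q ^ 2 :=
      hdivy _ _ (hasFDerivAt_const 1 q)
    have vm1x : px (fun q' => (-1:ℝ) / ρ q') q = (0 * ρ q - (-1) * px ρ q) / ρ q ^ 2 :=
      hdivx _ _ (hasFDerivAt_const (-1) q)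
    have e2 : E 2 q = px (fun q' => zx q' / ρ q') q + py (fun q' => zy q' / ρ q') q := by
      simp only [hE, hX02, hX22, hX12]
      rw [vzyy, vnzxx, v0x, v0y, vzxx]
      ring
    refine ⟨e2, ?_, ?_⟩
    · rw [e2]
      simp only [hE, hX00, hX20, hX10]
      rw [vzxx, vzyy, vnzyy, vnzyx, vm1x, v0y, hρx, hρy]
      field_simp
      linear_combination (zx q * px zx q + zy q * px zy q) * hr2
    · rw [e2]
      simp only [hE, hX01, hX21, hX11]
      rw [vzxx, vzyy, vzxy, v1y, v0x, hρx, hρy]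
      field_simp
      linear_combination (zx q * py zx q + zy q * py zy q) * hr2
  refine ⟨fun q => ?_, fun h q => ?_⟩
  · rw [(main q).1]
  · exact ⟨by rw [(main q).2.1, h q, mul_zero],
      by rw [(main q).2.2, h q, mul_zero]⟩

end
end

section
/- For a vector bundle E → M, the function assigning to u ∈ ∧²TE with ∧²Tτ(u) = w the functional g_u(v) = d_T^2 δ_E(u,v) on the fiber over w of ∧²T(E*⊗T*M)/V² satisfies: g_u = g_{u'} for u, u' in the same fiber of ∧²Tτ and τ²_E if and only if u − u' ∈ V²(E); consequently the fibration ∧²TE/V²(E) → ∧²TM carries a canonical vector bundle structure whose linear functions along fibers are the g_u-type pairings, with linear coordinates (e^a, y^{μb}) over base coordinates (x^μ, ẋ^{λν}). -/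
/-!
The pairing `g_u(v) = −e^a y^ν_{aν}(v) − f_{aν} y^{νa}(u)` is linear in the fiber data
`(e^a, y^{νa})` of `u`, and it determines them: testing against a `v` with a single nonzero
`y^ν_{aν}` (for a fixed `ν`) reads off `e^a`, and against a `v` with a single nonzero `f_{aν}`
reads off `y^{νa}`. So `(e, y) ↦ g_{(e,y)}` is an injective linear map, and `g_u = g_{u'}`
exactly when `u` and `u'` have the same `(e, y)`, i.e. differ by a 2-vertical bivector.
-/

section LiftedPairing

variable {ιM ιA : Type} [Fintype ιM] [Fintype ιA]

/-- `d_T^2 δ_E (u, v)` in coordinates: `p = (e, y)` with `y ν a = y^{νa}(u)`, the mixed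
components `u (inl ν) (inr a)` of `u`, and `v = (f, y_v)` with `y_v ν (a, ν') = y^ν_{aν'}(v)`. -/
def liftedPairing (p : Vec ιA × (ιM → ιA → ℝ))
    (v : (ιA → ιM → ℝ) × (ιM → ιA × ιM → ℝ)) : ℝ :=
  - (∑ a, ∑ ν, p.1 a * v.2 ν (a, ν)) - (∑ a, ∑ ν, v.1 a ν * p.2 ν a)

theorem isLinearMap_liftedPairing : IsLinearMap ℝ (liftedPairing (ιM := ιM) (ιA := ιA)) where
  map_add p q := by
    funext v
    simp only [liftedPairing, Prod.fst_add, Prod.snd_add, Pi.add_apply, add_mul, mul_add,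
      Finset.sum_add_distrib]
    ring
  map_smul c p := by
    funext v
    simp only [liftedPairing, Prod.smul_fst, Prod.smul_snd, Pi.smul_apply, smul_eq_mul,
      mul_assoc, mul_left_comm _ c, ← Finset.mul_sum]
    ring

theorem liftedPairing_single_snd [DecidableEq ιM] [DecidableEq ιA]
    (p : Vec ιA × (ιM → ιA → ℝ)) (ν₀ : ιM) (a : ιA) :
    liftedPairing p (0, Pi.single ν₀ (Pi.single (a, ν₀) 1)) = - p.1 a := by
  simp [liftedPairing, Pi.single_apply, ite_apply, Prod.ext_iff]

theorem liftedPairing_single_fst [DecidableEq ιM] [DecidableEq ιA]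
    (p : Vec ιA × (ιM → ιA → ℝ)) (ν : ιM) (a : ιA) :
    liftedPairing p (Pi.single a (Pi.single ν 1), 0) = - p.2 ν a := by
  simp [liftedPairing, Pi.single_apply, ite_apply]

theorem liftedPairing_injective [Nonempty ιM] :
    Function.Injective (liftedPairing (ιM := ιM) (ιA := ιA)) := by
  classical
  intro p q h
  obtain ⟨ν₀⟩ := ‹Nonempty ιM›
  refine Prod.ext (funext fun a => ?_) (funext fun ν => funext fun a => ?_)
  · simpa [liftedPairing_single_snd] using
      congrFun h (0, Pi.single ν₀ (Pi.single (a, ν₀) 1))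
  · simpa [liftedPairing_single_fst] using congrFun h (Pi.single a (Pi.single ν 1), 0)

end LiftedPairing

theorem gu_well_defined_and_linear_structure_general
    {ιM ιA : Type} [Fintype ιM] [Nonempty ιM]
    [Fintype ιA]
    (gval : Vec ιA → (ιM → ιA → ℝ) → ((ιA → ιM → ℝ) × (ιM → ιA × ιM → ℝ)) → ℝ)
    (hg : gval = fun e yu v =>
      - (∑ a, ∑ ν, e a * v.2 ν (a, ν)) - (∑ a, ∑ ν, v.1 a ν * yu ν a)) :
    -- `g_u = g_{u'}` iff `τ²_E(u) = τ²_E(u')` and `u − u' ∈ V²(E)`: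
    (∀ (e e' : Vec ιA) (u u' : Biv (ιM ⊕ ιA)), IsAnti u → IsAnti u' →
      (∀ μ ν, u (Sum.inl μ) (Sum.inl ν) = u' (Sum.inl μ) (Sum.inl ν)) →
      ((gval e (fun ν a => u (Sum.inl ν) (Sum.inr a)) =
        gval e' (fun ν a => u' (Sum.inl ν) (Sum.inr a)))
        ↔ (e = e' ∧ ∀ ν a, u (Sum.inl ν) (Sum.inr a) = u' (Sum.inl ν) (Sum.inr a)))) ∧
    -- hence the fiber data `(e^a, y^{μb})` are linear coordinates: the assignment
    -- `(e, y) ↦ g_{(e,y)}` is linear and injective into functionals on the `v`-fiber: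
    IsLinearMap ℝ (fun p : Vec ιA × (ιM → ιA → ℝ) => gval p.1 p.2) ∧
    Function.Injective (fun p : Vec ιA × (ιM → ιA → ℝ) => gval p.1 p.2) := by
  subst hg
  refine ⟨fun e e' u u' _ _ _ => ?_, isLinearMap_liftedPairing, liftedPairing_injective⟩
  change liftedPairing (e, _) = liftedPairing (e', _) ↔ _
  rw [liftedPairing_injective.eq_iff, Prod.mk.injEq]
  simp only [funext_iff]

theorem gu_well_defined_and_linear_structure
    {ιM ιA : Type} [Fintype ιM] [DecidableEq ιM] [Nonempty ιM]
    [Fintype ιA] [DecidableEq ιA]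
    (gval : Vec ιA → (ιM → ιA → ℝ) → ((ιA → ιM → ℝ) × (ιM → ιA × ιM → ℝ)) → ℝ)
    (hg : gval = fun e yu v =>
      - (∑ a, ∑ ν, e a * v.2 ν (a, ν)) - (∑ a, ∑ ν, v.1 a ν * yu ν a)) :
    -- `g_u = g_{u'}` iff `τ²_E(u) = τ²_E(u')` and `u − u' ∈ V²(E)`:
    (∀ (e e' : Vec ιA) (u u' : Biv (ιM ⊕ ιA)), IsAnti u → IsAnti u' →
      (∀ μ ν, u (Sum.inl μ) (Sum.inl ν) = u' (Sum.inl μ) (Sum.inl ν)) →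
      ((gval e (fun ν a => u (Sum.inl ν) (Sum.inr a)) =
        gval e' (fun ν a => u' (Sum.inl ν) (Sum.inr a)))
        ↔ (e = e' ∧ ∀ ν a, u (Sum.inl ν) (Sum.inr a) = u' (Sum.inl ν) (Sum.inr a)))) ∧
    -- hence the fiber data `(e^a, y^{μb})` are linear coordinates: the assignment
    -- `(e, y) ↦ g_{(e,y)}` is linear and injective into functionals on the `v`-fiber:
    IsLinearMap ℝ (fun p : Vec ιA × (ιM → ιA → ℝ) => gval p.1 p.2) ∧
    Function.Injective (fun p : Vec ιA × (ιM → ιA → ℝ) => gval p.1 p.2) :=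
  gu_well_defined_and_linear_structure_general gval hg
end
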